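/- arXiv:math/0507311 — 3 statements merged into one kernel-verified Lean document; each statement's English description precedes it below -/
import Mathlib

section
/- Let A be an essential finite arrangement of affine hyperplanes in ℝ^ℓ. Then the number of chambers of A equals π(A,1), i.e. |ch(A)| = Σ_{X∈L(A)} μ(X)(−1)^{r(X)}. -/
open scoped Classical

noncomputable section

variable (K : Type) [Field K] {V : Type} [AddCommGroup V] [Module K V]

/-- An affine hyperplane in `V`: the level set of a nonzero linear functional. -/
def IsHyperplane (H : Set V) : Prop :=
  ∃ (f : V →ₗ[K] K) (c : K), f ≠ 0 ∧ H = {x | f x = c}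

/-- The dimension of a subset of `V`: the dimension of its affine span. -/
def flatDim (X : Set V) : ℕ := Module.finrank K (affineSpan K X).direction

/-- The intersection poset `L(A)` of the arrangement `A` inside the ambient set `W`:
all nonempty intersections of subfamilies of `A` (intersected with the ambient `W`),
the empty subfamily giving `W` itself. -/
def interPosetIn (W : Set V) (A : Finset (Set V)) : Finset (Set V) :=
  (A.powerset.image fun S => W ∩ ⋂ H ∈ S, H).filter fun X => X.Nonempty

/-- The rank of `X`: its codimension within the ambient space `W`. -/
def rkIn (W X : Set V) : ℕ := flatDim K W - flatDim K X

/-- `μ` satisfies the defining recursion of the Möbius function of the poset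
`L(A)` inside the ambient set `W`.  `L(A)` is ordered by reverse inclusion, so the
condition `μ(W) = 1`, `μ(X) = -∑_{Y < X} μ(Y)` for `X > W` is equivalent to:
for every `X ∈ L(A)`, `∑_{Y ⊇ X} μ(Y)` is `1` if `X = W` and `0` otherwise. -/
def IsMobiusIn (W : Set V) (A : Finset (Set V)) (μ : Set V → ℤ) : Prop :=
  ∀ X ∈ interPosetIn W A,
    (∑ Y ∈ (interPosetIn W A).filter fun Y => X ⊆ Y, μ Y) = if X = W then 1 else 0

/-- The Poincaré polynomial `π(A,t) = ∑_{X ∈ L(A)} μ(X) (-t)^{r(X)}`. -/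
def poinIn (W : Set V) (A : Finset (Set V)) (μ : Set V → ℤ) : Polynomial ℤ :=
  ∑ X ∈ interPosetIn W A, Polynomial.C (μ X) * (- Polynomial.X) ^ (rkIn K W X)

/-- A chamber of the arrangement `A` within the ambient set `W`: a connected
component of `W ∖ ⋃_{H ∈ A} H`. -/
def IsChamberIn [TopologicalSpace V] (W : Set V) (A : Finset (Set V)) (C : Set V) : Prop :=
  ∃ x ∈ W ∩ (⋃ H ∈ A, (H : Set V))ᶜ, C = connectedComponentIn (W ∩ (⋃ H ∈ A, (H : Set V))ᶜ) x

/-- `F` is a generic (transversal) `q`-dimensional affine subspace for the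
arrangement `A`: it is (the carrier of) an affine subspace of dimension `q`, and
for every `X ∈ L(A)`, if `r(X) ≤ q` then `F ∩ X` is nonempty of dimension
`q - r(X)`, and if `r(X) > q` then `F ∩ X = ∅`. -/
def IsGenericFlat (q : ℕ) (A : Finset (Set V)) (F : Set V) : Prop :=
  (∃ W : AffineSubspace K V, (W : Set V) = F) ∧ F.Nonempty ∧ flatDim K F = q ∧
  ∀ X ∈ interPosetIn Set.univ A,
    (rkIn K Set.univ X ≤ q → (F ∩ X).Nonempty ∧ flatDim K (F ∩ X) = q - rkIn K Set.univ X) ∧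
    (q < rkIn K Set.univ X → F ∩ X = ∅)

end

/-!
Fix an equation `f H x = c H` for every `H ∈ A`. For a sign pattern `S ⊆ A`, the points on the
positive side of the hyperplanes in `S` and on the negative side of the others form an open convex
cell, and the chambers are exactly the nonempty cells. Inside an affine subspace `W`, a hyperplane
`H ⊉ W` splits every cell it meets into two (the cell is open in `W`) and leaves every other cell
on one side (the cell is convex), so the number of cells satisfies the deletion–restriction
recursion `N(W, E ∪ {H}) = N(W, E) + N(W ∩ H, E)`.

Whitney's formula `μ(X) = ∑_{S ⊆ A, ⋂ S = X} (-1)^|S|` is the unique Möbius function, and it turns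
`π(A, 1)` into `∑_{S ⊆ A, ⋂ S ≠ ∅} (-1)^(|S| + r(⋂ S))`. This sum satisfies the same recursion,
because `W ∩ H` has codimension one in `W`, and for `E = ∅` both are `1` if `W ≠ ∅` and `0`
otherwise.
-/

noncomputable section

open Finset Topology

section Mobius

variable {V : Type}

def interIn (W : Set V) (S : Finset (Set V)) : Set V := W ∩ ⋂ H ∈ S, H

lemma subset_interIn_iff {W X : Set V} {S : Finset (Set V)} :
    X ⊆ interIn W S ↔ X ⊆ W ∧ ∀ H ∈ S, X ⊆ H := by
  simp [interIn]

lemma interIn_insert (W H : Set V) (S : Finset (Set V)) :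
    interIn W (insert H S) = interIn (W ∩ H) S := by
  simp only [interIn, Finset.set_biInter_insert, Set.inter_assoc]

def whitneyMobius (W : Set V) (A : Finset (Set V)) (X : Set V) : ℤ :=
  ∑ S ∈ A.powerset with interIn W S = X, (-1) ^ #S

lemma mem_interPosetIn {W X : Set V} {A : Finset (Set V)} :
    X ∈ interPosetIn W A ↔ (∃ S ⊆ A, interIn W S = X) ∧ X.Nonempty := by
  simp [interPosetIn, interIn]

lemma sum_interPosetIn_whitneyMobius_mul (W : Set V) (A : Finset (Set V)) (g : Set V → ℤ) :
    ∑ X ∈ interPosetIn W A, whitneyMobius W A X * g X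
      = ∑ S ∈ A.powerset with (interIn W S).Nonempty, (-1) ^ #S * g (interIn W S) := by
  have hmaps : ∀ S ∈ {S ∈ A.powerset | (interIn W S).Nonempty},
      interIn W S ∈ interPosetIn W A := fun S hS ↦ by
    rw [mem_filter, mem_powerset] at hS
    exact mem_interPosetIn.2 ⟨⟨S, hS.1, rfl⟩, hS.2⟩
  rw [← sum_fiberwise_of_maps_to hmaps]
  refine sum_congr rfl fun X hX ↦ ?_
  rw [whitneyMobius, sum_mul, filter_filter]
  refine sum_congr (filter_congr fun S _ ↦ ?_) fun S hS ↦ by rw [(mem_filter.1 hS).2.2]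
  exact ⟨fun h ↦ ⟨h ▸ (mem_interPosetIn.1 hX).2, h⟩, fun h ↦ h.2⟩

lemma isMobiusIn_whitneyMobius {W : Set V} {A : Finset (Set V)} (hA : ∀ H ∈ A, ¬ W ⊆ H) :
    IsMobiusIn W A (whitneyMobius W A) := by
  intro X hX
  obtain ⟨⟨S₀, hS₀, rfl⟩, hne⟩ := mem_interPosetIn.1 hX
  set X := interIn W S₀
  set B := {H ∈ A | X ⊆ H}
  have hXW : X ⊆ W := Set.inter_subset_left
  have hsupports :
      {S ∈ A.powerset | (interIn W S).Nonempty ∧ X ⊆ interIn W S} = B.powerset := by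
    ext S
    simp only [B, mem_filter, mem_powerset, subset_interIn_iff, subset_iff]
    exact ⟨fun h H hH ↦ ⟨h.1 hH, h.2.2.2 H hH⟩, fun h ↦ ⟨fun H hH ↦ (h hH).1,
      hne.mono (subset_interIn_iff.2 ⟨hXW, fun H hH ↦ (h hH).2⟩), hXW,
      fun H hH ↦ (h hH).2⟩⟩
  have hB : B = ∅ ↔ X = W := by
    refine ⟨fun h ↦ ?_, fun h ↦ filter_eq_empty_iff.2 fun H hH hXH ↦ hA H hH (h ▸ hXH)⟩
    suffices S₀ = ∅ by simp [X, this, interIn]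
    refine eq_empty_iff_forall_notMem.2 fun H hH ↦ ?_
    have : H ∈ B := mem_filter.2 ⟨hS₀ hH, (subset_interIn_iff.1 subset_rfl).2 H hH⟩
    simp [h] at this
  calc ∑ Y ∈ interPosetIn W A with X ⊆ Y, whitneyMobius W A Y
      = ∑ Y ∈ interPosetIn W A, whitneyMobius W A Y * if X ⊆ Y then 1 else 0 := by
        simp only [sum_filter, mul_ite, mul_one, mul_zero]
    _ = ∑ S ∈ B.powerset, (-1) ^ #S := by
        rw [sum_interPosetIn_whitneyMobius_mul]
        simp only [mul_ite, mul_one, mul_zero]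
        rw [← sum_filter, filter_filter, hsupports]
    _ = if X = W then 1 else 0 := by simp only [sum_powerset_neg_one_pow_card, hB]

theorem IsMobiusIn.eqOn {W : Set V} {A : Finset (Set V)} {μ ν : Set V → ℤ}
    (hμ : IsMobiusIn W A μ) (hν : IsMobiusIn W A ν) : Set.EqOn μ ν ↑(interPosetIn W A) := by
  intro X (hX : X ∈ interPosetIn W A)
  induction hn : #{Y ∈ interPosetIn W A | X ⊆ Y} using Nat.strong_induction_on generalizing X
    with
  | _ n ih =>
  have hXX : X ∈ {Y ∈ interPosetIn W A | X ⊆ Y} := mem_filter.2 ⟨hX, subset_rfl⟩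
  have hrec := (hμ X hX).trans (hν X hX).symm
  rw [← add_sum_erase _ _ hXX, ← add_sum_erase _ _ hXX] at hrec
  suffices ∀ Y ∈ {Y ∈ interPosetIn W A | X ⊆ Y}.erase X, μ Y = ν Y by
    rw [sum_congr rfl this] at hrec
    exact add_right_cancel hrec
  intro Y hY
  obtain ⟨hYX, hY⟩ := mem_erase.1 hY
  obtain ⟨hYL, hXY⟩ := mem_filter.1 hY
  refine ih _ ?_ hYL rfl
  rw [← hn]
  refine card_lt_card ((ssubset_iff_of_subset fun Z hZ ↦ ?_).2 ⟨X, hXX, fun hXY' ↦ ?_⟩)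
  · exact mem_filter.2 ⟨(mem_filter.1 hZ).1, hXY.trans (mem_filter.1 hZ).2⟩
  · exact hYX (hXY.antisymm (mem_filter.1 hXY').2).symm

end Mobius

section Flats

variable {K V : Type} [Field K] [AddCommGroup V] [Module K V]

lemma flatDim_coe (W : AffineSubspace K V) :
    flatDim K (W : Set V) = Module.finrank K W.direction := by
  rw [flatDim, AffineSubspace.affineSpan_coe]

lemma flatDim_mono [FiniteDimensional K V] {X Y : Set V} (h : X ⊆ Y) :
    flatDim K X ≤ flatDim K Y :=
  Submodule.finrank_mono (AffineSubspace.direction_le (affineSpan_mono K h))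

lemma Submodule.finrank_inf_ker_add_one {U : Submodule K V} [FiniteDimensional K U]
    {f : V →ₗ[K] K} (hU : ¬ U ≤ LinearMap.ker f) :
    Module.finrank K ↥(U ⊓ LinearMap.ker f) + 1 = Module.finrank K U := by
  have hf : f.domRestrict U ≠ 0 := fun h ↦ hU fun v hv ↦ by
    simpa using LinearMap.congr_fun h ⟨v, hv⟩
  rw [← Module.Dual.finrank_ker_add_one_of_ne_zero hf, LinearMap.ker_domRestrict,
    ← Submodule.finrank_map_subtype_eq, Submodule.map_comap_subtype]

lemma AffineSubspace.coe_mk'_ker (f : V →ₗ[K] K) (p : V) :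
    (AffineSubspace.mk' p (LinearMap.ker f) : Set V) = {x | f x = f p} := by
  ext x
  simp [AffineSubspace.mem_mk', sub_eq_zero]

lemma AffineSubspace.exists_coe_eq_inter_levelSet (W : AffineSubspace K V) (f : V →ₗ[K] K)
    (c : K) : ∃ W' : AffineSubspace K V, (W' : Set V) = (W : Set V) ∩ {x | f x = c} := by
  rcases (W ∩ {x | f x = c} : Set V).eq_empty_or_nonempty with h | ⟨p, hpW, hp⟩
  · exact ⟨⊥, by rw [AffineSubspace.bot_coe, h]⟩
  · refine ⟨W ⊓ AffineSubspace.mk' p (LinearMap.ker f), ?_⟩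
    change (W : Set V) ∩ _ = _
    rw [AffineSubspace.coe_mk'_ker, show f p = c from hp]

lemma AffineSubspace.flatDim_inter_levelSet_add_one [FiniteDimensional K V]
    {W : AffineSubspace K V} {f : V →ₗ[K] K} {c : K}
    (hne : (W ∩ {x | f x = c} : Set V).Nonempty) (hW : ¬ (W : Set V) ⊆ {x | f x = c}) :
    flatDim K (W ∩ {x | f x = c} : Set V) + 1 = flatDim K (W : Set V) := by
  obtain ⟨p, hpW, hp : f p = c⟩ := hne
  obtain ⟨w, hwW, hw⟩ := Set.not_subset.1 hW
  have hdir : ¬ W.direction ≤ LinearMap.ker f := fun h ↦ hw <| by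
    simpa [hp, sub_eq_zero] using h (W.vsub_mem_direction hwW hpW)
  set P := W ⊓ AffineSubspace.mk' p (LinearMap.ker f)
  have hpP : p ∈ P := ⟨hpW, AffineSubspace.self_mem_mk' _ _⟩
  rw [← hp, ← AffineSubspace.coe_mk'_ker]
  change flatDim K (P : Set V) + 1 = _
  rw [flatDim_coe, flatDim_coe, AffineSubspace.direction_inf_of_mem_inf hpP,
    AffineSubspace.direction_mk', Submodule.finrank_inf_ker_add_one hdir]

lemma IsHyperplane.not_univ_subset {H : Set V} (hH : IsHyperplane K H) : ¬ Set.univ ⊆ H := by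
  obtain ⟨f, c, hf, rfl⟩ := hH
  intro h
  obtain ⟨v, hv⟩ := DFunLike.ne_iff.1 hf
  exact hv <| (h (Set.mem_univ v)).trans ((h (Set.mem_univ 0)).symm.trans f.map_zero)

lemma exists_equations_of_isHyperplane {A : Finset (Set V)}
    (hA : ∀ H ∈ A, IsHyperplane K H) :
    ∃ (f : Set V → V →ₗ[K] K) (c : Set V → K), ∀ H ∈ A, H = {x | f H x = c H} := by
  choose! f c _ hfc using hA
  exact ⟨f, c, hfc⟩

end Flats

section WhitneySum

variable (K : Type) {V : Type} [Field K] [AddCommGroup V] [Module K V]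

def whitneySum (W : Set V) (E : Finset (Set V)) : ℤ :=
  ∑ S ∈ E.powerset with (interIn W S).Nonempty, (-1) ^ (#S + rkIn K W (interIn W S))

variable {K}

theorem IsMobiusIn.sum_mul_neg_one_pow_rkIn {W : Set V} {A : Finset (Set V)} {μ : Set V → ℤ}
    (hA : ∀ H ∈ A, ¬ W ⊆ H) (hμ : IsMobiusIn W A μ) :
    ∑ X ∈ interPosetIn W A, μ X * (-1) ^ rkIn K W X = whitneySum K W A := by
  rw [sum_congr rfl fun X hX ↦ by rw [hμ.eqOn (isMobiusIn_whitneyMobius hA) hX],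
    sum_interPosetIn_whitneyMobius_mul, whitneySum]
  simp only [pow_add]

lemma whitneySum_empty (W : Set V) : whitneySum K W ∅ = if W.Nonempty then 1 else 0 := by
  rw [whitneySum, sum_filter]
  simp [interIn, rkIn]

lemma whitneySum_insert {H : Set V} {E : Finset (Set V)} (hH : H ∉ E) (W : Set V) :
    whitneySum K W (insert H E) = whitneySum K W E -
      ∑ S ∈ E.powerset with (interIn (W ∩ H) S).Nonempty,
        (-1) ^ (#S + rkIn K W (interIn (W ∩ H) S)) := by
  simp only [whitneySum, sum_filter, sum_powerset_insert hH, sub_eq_add_neg, ← sum_neg_distrib]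
  congr 1
  refine sum_congr rfl fun S hS ↦ ?_
  rw [interIn_insert, card_insert_of_notMem fun h ↦ hH (mem_powerset.1 hS h)]
  split_ifs <;> ring

lemma whitneySum_insert_of_subset {H : Set V} {E : Finset (Set V)} (hH : H ∉ E) {W : Set V}
    (hWH : W ⊆ H) : whitneySum K W (insert H E) = 0 := by
  rw [whitneySum_insert hH, Set.inter_eq_left.2 hWH, whitneySum, sub_self]

lemma whitneySum_insert_of_flatDim_add_one [FiniteDimensional K V] {H : Set V}
    {E : Finset (Set V)} (hH : H ∉ E) {W : Set V}
    (hcodim : (W ∩ H).Nonempty → flatDim K (W ∩ H) + 1 = flatDim K W) :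
    whitneySum K W (insert H E) = whitneySum K W E + whitneySum K (W ∩ H) E := by
  rw [whitneySum_insert hH, sub_eq_add_neg, ← sum_neg_distrib, whitneySum]
  refine congrArg _ (sum_congr rfl fun S hS ↦ ?_)
  have hY := (mem_filter.1 hS).2
  have hdim := hcodim (hY.mono Set.inter_subset_left)
  have hle : flatDim K (interIn (W ∩ H) S) ≤ flatDim K (W ∩ H) :=
    flatDim_mono Set.inter_subset_left
  rw [show rkIn K W (interIn (W ∩ H) S) = rkIn K (W ∩ H) (interIn (W ∩ H) S) + 1 by
    unfold rkIn; omega]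
  ring

end WhitneySum

section HalfSpaces

lemma Convex.exists_eq_of_le_of_le {E : Type*} [AddCommGroup E] [Module ℝ E] {C : Set E}
    (hC : Convex ℝ C) (g : E →ₗ[ℝ] ℝ) {a b : E} (ha : a ∈ C) (hb : b ∈ C) {r : ℝ}
    (hga : g a ≤ r) (hgb : r ≤ g b) : ∃ x ∈ C, g x = r :=
  (hC.linear_image g).ordConnected.out ⟨a, ha, rfl⟩ ⟨b, hb, rfl⟩ ⟨hga, hgb⟩

variable {E : Type*} [AddCommGroup E] [Module ℝ E] [TopologicalSpace E]
  [IsTopologicalAddGroup E] [ContinuousSMul ℝ E]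

lemma AffineSubspace.exists_lt_and_exists_gt (W : AffineSubspace ℝ E) {U : Set E}
    (hU : IsOpen U) (g : E →ₗ[ℝ] ℝ) {x : E} (hxW : x ∈ W) (hxU : x ∈ U)
    (hW : ¬ (W : Set E) ⊆ {y | g y = g x}) :
    (∃ y ∈ (W : Set E) ∩ U, g y < g x) ∧ ∃ y ∈ (W : Set E) ∩ U, g x < g y := by
  obtain ⟨w, hwW, hw : g w ≠ g x⟩ := Set.not_subset.1 hW
  set v := (g (w - x))⁻¹ • (w - x)
  have hgv : g v = 1 := by
    rw [map_smul, smul_eq_mul, inv_mul_cancel₀ (by rwa [map_sub, sub_ne_zero])]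
  have hline : ∀ t : ℝ, t • v + x ∈ W := fun t ↦
    W.vadd_mem_of_mem_direction (W.direction.smul_mem _ <| W.direction.smul_mem _ <|
      W.vsub_mem_direction hwW hxW) hxW
  have hnear : ∀ᶠ t in 𝓝 (0 : ℝ), t • v + x ∈ U :=
    ((by fun_prop : Continuous fun t : ℝ ↦ t • v + x).tendsto' 0 x (by simp)).eventually
      (hU.mem_nhds hxU)
  have hval : ∀ t : ℝ, g (t • v + x) = t + g x := fun t ↦ by simp [hgv]
  obtain ⟨t₁, ht₁U, ht₁ : t₁ < 0⟩ :=
    (Filter.Eventually.and (nhdsWithin_le_nhds hnear) self_mem_nhdsWithin :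
      ∀ᶠ t in 𝓝[<] (0 : ℝ), t • v + x ∈ U ∧ t ∈ Set.Iio 0).exists
  obtain ⟨t₂, ht₂U, ht₂ : 0 < t₂⟩ :=
    (Filter.Eventually.and (nhdsWithin_le_nhds hnear) self_mem_nhdsWithin :
      ∀ᶠ t in 𝓝[>] (0 : ℝ), t • v + x ∈ U ∧ t ∈ Set.Ioi 0).exists
  exact ⟨⟨_, ⟨hline t₁, ht₁U⟩, by linarith [hval t₁]⟩,
    ⟨_, ⟨hline t₂, ht₂U⟩, by linarith [hval t₂]⟩⟩

lemma AffineSubspace.count_open_sides_eq (W : AffineSubspace ℝ E) {U : Set E}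
    (hU : IsOpen U) (hUc : Convex ℝ U) (g : E →ₗ[ℝ] ℝ) (r : ℝ)
    (hW : ¬ (W : Set E) ⊆ {x | g x = r}) :
    ((if ((W : Set E) ∩ U ∩ {x | g x < r}).Nonempty then 1 else 0) +
        (if ((W : Set E) ∩ U ∩ {x | r < g x}).Nonempty then 1 else 0) : ℕ) =
      (if ((W : Set E) ∩ U).Nonempty then 1 else 0) +
        (if ((W : Set E) ∩ U ∩ {x | g x = r}).Nonempty then 1 else 0) := by
  set C := (W : Set E) ∩ U
  have hcross : (C ∩ {x | g x < r}).Nonempty → (C ∩ {x | r < g x}).Nonempty →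
      (C ∩ {x | g x = r}).Nonempty := fun ⟨a, haC, ha⟩ ⟨b, hbC, hb⟩ ↦
    (W.convex.inter hUc).exists_eq_of_le_of_le g haC hbC (le_of_lt ha) (le_of_lt hb)
  have hsplit : (C ∩ {x | g x = r}).Nonempty →
      (C ∩ {x | g x < r}).Nonempty ∧ (C ∩ {x | r < g x}).Nonempty := by
    rintro ⟨x, ⟨hxW, hxU⟩, rfl : g x = r⟩
    exact W.exists_lt_and_exists_gt hU g hxW hxU hW
  have hcover : C.Nonempty → (C ∩ {x | g x < r}).Nonempty ∨ (C ∩ {x | g x = r}).Nonempty ∨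
      (C ∩ {x | r < g x}).Nonempty := fun ⟨x, hx⟩ ↦
    (lt_trichotomy (g x) r).imp (fun h ↦ ⟨x, hx, h⟩) (Or.imp (fun h ↦ ⟨x, hx, h⟩)
      (fun h ↦ ⟨x, hx, h⟩))
  have hC {s : Set E} : (C ∩ s).Nonempty → C.Nonempty := (·.mono Set.inter_subset_left)
  by_cases he : (C ∩ {x | g x = r}).Nonempty
  · obtain ⟨hlt, hgt⟩ := hsplit he
    simp only [he, hlt, hgt, hC he, if_true]
  by_cases hlt : (C ∩ {x | g x < r}).Nonempty
  · have hgt : ¬ (C ∩ {x | r < g x}).Nonempty := fun hgt ↦ he (hcross hlt hgt)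
    simp only [he, hlt, hgt, hC hlt, if_true, if_false]
  by_cases hgt : (C ∩ {x | r < g x}).Nonempty
  · simp only [he, hlt, hgt, hC hgt, if_true, if_false]
  have hCe : ¬ C.Nonempty := fun hCne ↦ by have := hcover hCne; tauto
  simp only [he, hlt, hgt, hCe, if_false]

end HalfSpaces

section SignCells

variable {V : Type} [NormedAddCommGroup V] [NormedSpace ℝ V]
  (f : Set V → V →ₗ[ℝ] ℝ) (c : Set V → ℝ)

def openSide (S : Finset (Set V)) (H : Set V) : Set V :=
  if H ∈ S then {x | c H < f H x} else {x | f H x < c H}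

def signRegion (E S : Finset (Set V)) : Set V := ⋂ H ∈ E, openSide f c S H

def numCells (W : Set V) (E : Finset (Set V)) : ℕ :=
  #{S ∈ E.powerset | (W ∩ signRegion f c E S).Nonempty}

lemma isOpen_signRegion [FiniteDimensional ℝ V] (E S : Finset (Set V)) :
    IsOpen (signRegion f c E S) :=
  isOpen_biInter_finset fun H _ ↦ by
    unfold openSide
    split_ifs
    exacts [isOpen_lt continuous_const (f H).continuous_of_finiteDimensional,
      isOpen_lt (f H).continuous_of_finiteDimensional continuous_const]

lemma convex_signRegion (E S : Finset (Set V)) : Convex ℝ (signRegion f c E S) :=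
  convex_iInter₂ fun H _ ↦ by
    unfold openSide
    split_ifs
    exacts [convex_halfSpace_gt (f H).isLinear _, convex_halfSpace_lt (f H).isLinear _]

lemma apply_ne_of_mem_openSide {S : Finset (Set V)} {H : Set V} {x : V}
    (hx : x ∈ openSide f c S H) : f H x ≠ c H := by
  unfold openSide at hx
  split_ifs at hx
  exacts [(ne_of_lt hx).symm, ne_of_lt hx]

variable {f c}

lemma signRegion_insert (H : Set V) (E S : Finset (Set V)) :
    signRegion f c (insert H E) S = signRegion f c E S ∩ openSide f c S H := by
  rw [signRegion, set_biInter_insert, Set.inter_comm, signRegion]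

lemma signRegion_insert_pattern {H : Set V} {E : Finset (Set V)} (hH : H ∉ E)
    (S : Finset (Set V)) : signRegion f c E (insert H S) = signRegion f c E S :=
  Set.iInter₂_congr fun H' hH' ↦ by
    simp only [openSide, mem_insert, show H' ≠ H from fun h ↦ hH (h ▸ hH'), false_or]

lemma numCells_insert_of_subset {H : Set V} {E : Finset (Set V)}
    (hHeq : H = {x | f H x = c H}) {W : Set V} (hWH : W ⊆ H) :
    numCells f c W (insert H E) = 0 := by
  refine card_eq_zero.2 <| filter_eq_empty_iff.2 fun S _ ⟨x, hxW, hx⟩ ↦ ?_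
  refine apply_ne_of_mem_openSide f c (Set.mem_iInter₂.1 hx H (mem_insert_self H E)) ?_
  rw [hHeq] at hWH
  exact hWH hxW

theorem numCells_insert [FiniteDimensional ℝ V] {H : Set V} {E : Finset (Set V)} (hH : H ∉ E)
    (hHeq : H = {x | f H x = c H}) (W : AffineSubspace ℝ V) (hWH : ¬ (W : Set V) ⊆ H) :
    numCells f c W (insert H E) = numCells f c W E + numCells f c (W ∩ H) E := by
  simp only [numCells, card_filter, sum_powerset_insert hH, ← sum_add_distrib]
  refine sum_congr rfl fun S hS ↦ ?_
  have hHS : H ∉ S := fun h ↦ hH (mem_powerset.1 hS h)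
  rw [signRegion_insert, signRegion_insert, signRegion_insert_pattern hH,
    Set.inter_right_comm (W : Set V) H, ← Set.inter_assoc, ← Set.inter_assoc]
  simp only [openSide, hHS, mem_insert_self, if_true, if_false]
  have key := W.count_open_sides_eq (isOpen_signRegion f c E S) (convex_signRegion f c E S)
    (f H) (c H) (by rwa [← hHeq])
  rwa [← hHeq] at key

theorem numCells_eq_whitneySum [FiniteDimensional ℝ V] {E : Finset (Set V)}
    (hE : ∀ H ∈ E, H = {x | f H x = c H}) (W : AffineSubspace ℝ V) :
    (numCells f c W E : ℤ) = whitneySum ℝ W E := by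
  induction E using Finset.induction_on generalizing W with
  | empty =>
    rw [whitneySum_empty]
    by_cases hW : (W : Set V).Nonempty <;> simp [numCells, signRegion, hW]
  | insert H E hH ih =>
    obtain ⟨hHeq, hE⟩ := forall_mem_insert _ _ _ |>.1 hE
    by_cases hWH : (W : Set V) ⊆ H
    · rw [numCells_insert_of_subset hHeq hWH, whitneySum_insert_of_subset hH hWH, Nat.cast_zero]
    obtain ⟨W', hW'⟩ := W.exists_coe_eq_inter_levelSet (f H) (c H)
    rw [← hHeq] at hW'
    have hcodim : ((W : Set V) ∩ H).Nonempty →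
        flatDim ℝ ((W : Set V) ∩ H) + 1 = flatDim ℝ (W : Set V) := by
      rw [hHeq] at hWH ⊢
      exact fun hne ↦ W.flatDim_inter_levelSet_add_one hne hWH
    rw [numCells_insert hH hHeq W hWH, whitneySum_insert_of_flatDim_add_one hH hcodim,
      Nat.cast_add, ih hE W, ← hW', ih hE W']

end SignCells

section Chambers

variable {V : Type} [NormedAddCommGroup V] [NormedSpace ℝ V]
  {f : Set V → V →ₗ[ℝ] ℝ} {c : Set V → ℝ} {A : Finset (Set V)}

variable (f c) in
def signPattern (A : Finset (Set V)) (x : V) : Finset (Set V) := {H ∈ A | c H < f H x}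

lemma mem_signRegion_signPattern (hA : ∀ H ∈ A, H = {x | f H x = c H}) {x : V}
    (hx : x ∈ (⋃ H ∈ A, H)ᶜ) : x ∈ signRegion f c A (signPattern f c A x) := by
  refine Set.mem_iInter₂.2 fun H hH ↦ ?_
  have hxH : f H x ≠ c H := fun h ↦ hx (Set.mem_biUnion hH (by rw [hA H hH]; exact h))
  by_cases h : c H < f H x
  · simp [openSide, signPattern, hH, h]
  · simpa [openSide, signPattern, hH, h] using lt_of_le_of_ne (not_lt.1 h) hxH

lemma signRegion_subset_compl (hA : ∀ H ∈ A, H = {x | f H x = c H}) (S : Finset (Set V)) :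
    signRegion f c A S ⊆ (⋃ H ∈ A, H)ᶜ := fun x hx hxA ↦ by
  obtain ⟨H, hH, hxH⟩ := Set.mem_iUnion₂.1 hxA
  rw [hA H hH] at hxH
  exact apply_ne_of_mem_openSide f c (Set.mem_iInter₂.1 hx H hH) hxH

lemma signPattern_eq_of_mem_signRegion {S : Finset (Set V)} (hS : S ⊆ A) {x : V}
    (hx : x ∈ signRegion f c A S) : signPattern f c A x = S := by
  ext H
  simp only [signPattern, mem_filter]
  refine ⟨fun ⟨hH, hlt⟩ ↦ by_contra fun hHS ↦ ?_, fun hHS ↦ ⟨hS hHS, ?_⟩⟩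
  · have := Set.mem_iInter₂.1 hx H hH
    simp only [openSide, hHS, if_false] at this
    change f H x < c H at this
    linarith
  · simpa [openSide, hHS] using Set.mem_iInter₂.1 hx H (hS hHS)

lemma connectedComponentIn_eq_signRegion [FiniteDimensional ℝ V]
    (hA : ∀ H ∈ A, H = {x | f H x = c H}) {x : V} (hx : x ∈ (⋃ H ∈ A, H)ᶜ) :
    connectedComponentIn (⋃ H ∈ A, H)ᶜ x = signRegion f c A (signPattern f c A x) := by
  have hxx := mem_signRegion_signPattern hA hx
  refine Set.Subset.antisymm ?_ ((convex_signRegion f c A _).isPreconnected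
    |>.subset_connectedComponentIn hxx (signRegion_subset_compl hA _))
  refine isPreconnected_connectedComponentIn.subset_left_of_subset_union
    (v := ⋃ S ∈ A.powerset.erase (signPattern f c A x), signRegion f c A S)
    (isOpen_signRegion f c A _) (isOpen_biUnion fun S _ ↦ isOpen_signRegion f c A S)
    (Set.disjoint_left.2 fun y hy hyv ↦ ?_) (fun y hy ↦ ?_)
    ⟨x, mem_connectedComponentIn hx, hxx⟩
  · obtain ⟨S, hS, hyS⟩ := Set.mem_iUnion₂.1 hyv
    obtain ⟨hne, hSA⟩ := mem_erase.1 hS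
    exact hne ((signPattern_eq_of_mem_signRegion (mem_powerset.1 hSA) hyS).symm.trans
      (signPattern_eq_of_mem_signRegion (filter_subset _ _) hy))
  · have hyy := mem_signRegion_signPattern hA (connectedComponentIn_subset _ _ hy)
    by_cases h : signPattern f c A y = signPattern f c A x
    · exact Or.inl (h ▸ hyy)
    · exact Or.inr <|
        Set.mem_biUnion (mem_erase.2 ⟨h, mem_powerset.2 (filter_subset _ _)⟩) hyy

theorem natCard_chambers_eq_numCells [FiniteDimensional ℝ V]
    (hA : ∀ H ∈ A, H = {x | f H x = c H}) :
    Nat.card {C : Set V // IsChamberIn Set.univ A C} = numCells f c Set.univ A := by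
  have hchambers : {C | IsChamberIn Set.univ A C} =
      signRegion f c A '' ↑{S ∈ A.powerset | (Set.univ ∩ signRegion f c A S).Nonempty} := by
    ext C
    simp only [IsChamberIn, Set.univ_inter, Set.mem_ofPred_eq, Set.mem_image, coe_filter,
      mem_powerset]
    constructor
    · rintro ⟨x, hx, rfl⟩
      exact ⟨signPattern f c A x, ⟨filter_subset _ _, x, mem_signRegion_signPattern hA hx⟩,
        (connectedComponentIn_eq_signRegion hA hx).symm⟩
    · rintro ⟨S, ⟨hSA, x, hx⟩, rfl⟩
      have hxM := signRegion_subset_compl hA S hx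
      exact ⟨x, hxM, by rw [connectedComponentIn_eq_signRegion hA hxM,
        signPattern_eq_of_mem_signRegion hSA hx]⟩
  have hinj : Set.InjOn (signRegion f c A)
      ↑{S ∈ A.powerset | (Set.univ ∩ signRegion f c A S).Nonempty} := by
    intro S hS S' hS' hSS'
    simp only [coe_filter, mem_powerset, Set.univ_inter] at hS hS'
    obtain ⟨x, hx⟩ := hS.2
    rw [← signPattern_eq_of_mem_signRegion hS.1 hx,
      signPattern_eq_of_mem_signRegion hS'.1 (hSS' ▸ hx)]
  change Nat.card ↥{C | IsChamberIn Set.univ A C} = _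
  rw [Nat.card_coe_set_eq, hchambers, hinj.ncard_image, Set.ncard_coe_finset, numCells]

end Chambers

end

theorem number_of_chambers_general {ℓ : ℕ} (A : Finset (Set (Fin ℓ → ℝ)))
    (hA : ∀ H ∈ A, IsHyperplane ℝ H)
    (μ : Set (Fin ℓ → ℝ) → ℤ) (hμ : IsMobiusIn Set.univ A μ) :
    (Nat.card {C : Set (Fin ℓ → ℝ) // IsChamberIn Set.univ A C} : ℤ)
      = ∑ X ∈ interPosetIn Set.univ A, μ X * (-1 : ℤ) ^ rkIn ℝ Set.univ X := by
  obtain ⟨f, c, hfc⟩ := exists_equations_of_isHyperplane hA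
  have hcells := numCells_eq_whitneySum hfc ⊤
  rw [AffineSubspace.top_coe] at hcells
  rw [natCard_chambers_eq_numCells hfc, hcells,
    hμ.sum_mul_neg_one_pow_rkIn fun H hH ↦ (hA H hH).not_univ_subset]

/-- For an essential finite arrangement of affine hyperplanes in `ℝ^ℓ`,
the number of chambers equals `π(A,1) = ∑_{X ∈ L(A)} μ(X) (-1)^{r(X)}`. -/
theorem number_of_chambers {ℓ : ℕ} (A : Finset (Set (Fin ℓ → ℝ)))
    (hA : ∀ H ∈ A, IsHyperplane ℝ H)
    (hess : ∃ X ∈ interPosetIn Set.univ A, rkIn ℝ Set.univ X = ℓ)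
    (μ : Set (Fin ℓ → ℝ) → ℤ) (hμ : IsMobiusIn Set.univ A μ) :
    (Nat.card {C : Set (Fin ℓ → ℝ) // IsChamberIn Set.univ A C} : ℤ)
      = ∑ X ∈ interPosetIn Set.univ A, μ X * (-1 : ℤ) ^ rkIn ℝ Set.univ X :=
  number_of_chambers_general A hA μ hμ
end

section
/- Let A be an essential finite arrangement of affine hyperplanes in ℝ^ℓ. Then the number of bounded chambers of A equals (−1)^ℓ π(A,−1) = β(A). -/
open scoped Classical
open Filter Topology

noncomputable section Zasl

/-- eventual value of `f` along filter `l` (junk `0` if none). -/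
def elimF (l : Filter ℝ) (f : ℝ → ℤ) : ℤ :=
  if h : ∃ c, ∀ᶠ x in l, f x = c then h.choose else 0

lemma elimF_eq {l : Filter ℝ} [hl : l.NeBot] {f : ℝ → ℤ} {c : ℤ}
    (h : ∀ᶠ x in l, f x = c) : elimF l f = c := by
  have hex : ∃ c, ∀ᶠ x in l, f x = c := ⟨c, h⟩
  rw [elimF, dif_pos hex]
  obtain ⟨x, h1, h2⟩ := (hex.choose_spec.and h).exists
  rw [← h1, h2]

def lval (f : ℝ → ℤ) : ℤ := elimF atBot f

def llim (f : ℝ → ℤ) (x : ℝ) : ℤ := elimF (nhdsWithin x (Set.Iio x)) f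

def jmp (f : ℝ → ℤ) (x : ℝ) : ℤ := f x - llim f x

def vv (f : ℝ → ℤ) : ℤ := lval f + ∑ᶠ x, jmp f x

structure TameF (f : ℝ → ℤ) : Prop where
  bot : ∃ c, ∀ᶠ t in atBot, f t = c
  left : ∀ x : ℝ, ∃ c, ∀ᶠ t in 𝓝[<] x, f t = c
  fin : (Function.support (jmp f)).Finite

lemma llim_add {f g : ℝ → ℤ} (hf : TameF f) (hg : TameF g) (x : ℝ) :
    llim (f + g) x = llim f x + llim g x := by
  obtain ⟨cf, hcf⟩ := hf.left x
  obtain ⟨cg, hcg⟩ := hg.left x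
  rw [llim, llim, llim, elimF_eq hcf, elimF_eq hcg, elimF_eq (f := f + g) (c := cf + cg)]
  filter_upwards [hcf, hcg] with t h1 h2
  simp [h1, h2]

lemma jmp_add {f g : ℝ → ℤ} (hf : TameF f) (hg : TameF g) :
    jmp (f + g) = jmp f + jmp g := by
  funext x
  simp only [jmp, llim_add hf hg, Pi.add_apply]
  ring

lemma vv_add {f g : ℝ → ℤ} (hf : TameF f) (hg : TameF g) :
    vv (f + g) = vv f + vv g := by
  obtain ⟨cf, hcf⟩ := hf.bot
  obtain ⟨cg, hcg⟩ := hg.bot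
  have h1 : lval (f + g) = lval f + lval g := by
    rw [lval, lval, lval, elimF_eq hcf, elimF_eq hcg, elimF_eq (f := f + g) (c := cf + cg)]
    filter_upwards [hcf, hcg] with t h1 h2
    simp [h1, h2]
  have h2 : ∑ᶠ x, jmp (f + g) x = (∑ᶠ x, jmp f x) + ∑ᶠ x, jmp g x := by
    rw [jmp_add hf hg]
    exact finsum_add_distrib hf.fin hg.fin
  simp only [vv, h1, h2]; ring

lemma tameF_add {f g : ℝ → ℤ} (hf : TameF f) (hg : TameF g) : TameF (f + g) := by
  refine ⟨?_, ?_, ?_⟩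
  · obtain ⟨cf, hcf⟩ := hf.bot
    obtain ⟨cg, hcg⟩ := hg.bot
    exact ⟨cf + cg, by filter_upwards [hcf, hcg] with t h1 h2; simp [h1, h2]⟩
  · intro x
    obtain ⟨cf, hcf⟩ := hf.left x
    obtain ⟨cg, hcg⟩ := hg.left x
    exact ⟨cf + cg, by filter_upwards [hcf, hcg] with t h1 h2; simp [h1, h2]⟩
  · rw [jmp_add hf hg]
    exact (hf.fin.union hg.fin).subset (Function.support_add _ _)

lemma llim_const (c : ℤ) (x : ℝ) : llim (fun _ => c) x = c :=
  elimF_eq (Eventually.of_forall fun _ => rfl)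

lemma jmp_const (c : ℤ) : jmp (fun _ => c) = fun _ => 0 := by
  funext x; simp [jmp, llim_const]

lemma vv_const (c : ℤ) : vv (fun _ => c) = c := by
  have : lval (fun _ => c) = c := elimF_eq (Eventually.of_forall fun _ => rfl)
  simp [vv, this, jmp_const]

lemma tameF_const (c : ℤ) : TameF (fun _ => c) :=
  ⟨⟨c, Eventually.of_forall fun _ => rfl⟩,
   fun _ => ⟨c, Eventually.of_forall fun _ => rfl⟩,
   by rw [jmp_const]; simp [Function.support]⟩

/-- indicator with value `c`. -/
def sind {α : Type*} (S : Set α) (c : ℤ) : α → ℤ := fun x => if x ∈ S then c else 0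


lemma llim_eq_of_Ioo {f : ℝ → ℤ} {y x : ℝ} (h : y < x) {c : ℤ}
    (hf : ∀ t ∈ Set.Ioo y x, f t = c) : llim f x = c := by
  apply elimF_eq
  filter_upwards [Ioo_mem_nhdsLT h] with t ht using hf t ht

lemma llim_singleton (a : ℝ) (c : ℤ) (x : ℝ) : llim (sind {a} c) x = 0 := by
  rcases le_or_gt x a with h | h
  · refine llim_eq_of_Ioo (y := x - 1) (by linarith) fun t ht => ?_
    have : t ≠ a := by rcases ht with ⟨h1, h2⟩; intro he; rw [he] at h2; linarith
    simp [sind, this]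
  · refine llim_eq_of_Ioo (y := a) h fun t ht => ?_
    have : t ≠ a := by rcases ht with ⟨h1, h2⟩; linarith
    simp [sind, this]

lemma jmp_singleton (a : ℝ) (c : ℤ) : jmp (sind {a} c) = sind {a} c := by
  funext x; simp [jmp, llim_singleton]

lemma vv_sind_singleton (a : ℝ) (c : ℤ) : vv (sind {a} c) = c := by
  have hl : lval (sind {a} c) = 0 := by
    apply elimF_eq
    filter_upwards [eventually_lt_atBot a] with t ht
    have : t ≠ a := ne_of_lt ht
    simp [sind, this]
  have hs : ∑ᶠ x, jmp (sind {a} c) x = c := by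
    rw [jmp_singleton]
    rw [finsum_eq_single _ a]
    · simp [sind]
    · intro x hx; simp [sind, hx]
  simp [vv, hl, hs]

lemma tameF_sind_singleton (a : ℝ) (c : ℤ) : TameF (sind {a} c) := by
  refine ⟨⟨0, ?_⟩, fun x => ⟨0, ?_⟩, ?_⟩
  · filter_upwards [eventually_lt_atBot a] with t ht
    simp [sind, ne_of_lt ht]
  · rcases le_or_gt x a with h | h
    · filter_upwards [Ioo_mem_nhdsLT (show x - 1 < x by linarith)] with t ht
      have : t ≠ a := by rcases ht with ⟨h1, h2⟩; intro he; rw [he] at h2; linarith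
      simp [sind, this]
    · filter_upwards [Ioo_mem_nhdsLT h] with t ht
      have : t ≠ a := by rcases ht with ⟨h1, h2⟩; linarith
      simp [sind, this]
  · rw [jmp_singleton]
    apply Set.Finite.subset (Set.finite_singleton a)
    intro x hx
    simp only [Function.mem_support, sind] at hx
    by_contra hne
    simp only [Set.mem_singleton_iff] at hne ⊢
    exact hx (by simp [hne])



lemma ev_of_Ioo {f : ℝ → ℤ} {y x : ℝ} (h : y < x) {c : ℤ}
    (hf : ∀ t ∈ Set.Ioo y x, f t = c) : ∀ᶠ t in 𝓝[<] x, f t = c := by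
  filter_upwards [Ioo_mem_nhdsLT h] with t ht using hf t ht

/-- eventual left-constancy of the indicator of an open convex set, with value. -/
lemma ev_openConvex {J : Set ℝ} (ho : IsOpen J) (hc : Convex ℝ J) (k : ℤ) (x : ℝ) :
    (∀ᶠ t in 𝓝[<] x, sind J k t = k) ∨ (∀ᶠ t in 𝓝[<] x, sind J k t = 0) := by
  by_cases hx : x ∈ J
  · left
    obtain ⟨ε, hε, hball⟩ := Metric.isOpen_iff.1 ho x hx
    refine ev_of_Ioo (y := x - ε) (by linarith) fun t ht => ?_
    have : t ∈ J := by
      apply hball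
      rw [Metric.mem_ball, Real.dist_eq, abs_lt]
      exact ⟨by rcases ht with ⟨h1,h2⟩; linarith, by rcases ht with ⟨h1,h2⟩; linarith⟩
    simp [sind, this]
  by_cases hb : ∃ y ∈ J, y < x
  · obtain ⟨y, hy, hyx⟩ := hb
    by_cases happ : ∀ y' < x, ∃ t ∈ J, y' < t ∧ t < x
    · left
      refine ev_of_Ioo hyx fun t ht => ?_
      obtain ⟨t', ht', h1, h2⟩ := happ t ht.2
      have : t ∈ J := hc.ordConnected.out hy ht' ⟨le_of_lt ht.1, le_of_lt h1⟩
      simp [sind, this]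
    · right
      push_neg at happ
      obtain ⟨y', hy'x, hy'⟩ := happ
      refine ev_of_Ioo (max_lt hyx hy'x : max y y' < x) fun t ht => ?_
      have htJ : t ∉ J := fun htJ =>
        absurd (hy' t htJ (lt_of_le_of_lt (le_max_right y y') ht.1)) (not_le.2 ht.2)
      simp [sind, htJ]
  · right
    push_neg at hb
    refine ev_of_Ioo (show x - 1 < x by linarith) fun t ht => ?_
    have htJ : t ∉ J := fun htJ => absurd (hb t htJ) (not_le.2 ht.2)
    simp [sind, htJ]

lemma llim_open_mem {J : Set ℝ} (ho : IsOpen J) (k : ℤ) {x : ℝ} (hx : x ∈ J) :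
    llim (sind J k) x = k := by
  obtain ⟨ε, hε, hball⟩ := Metric.isOpen_iff.1 ho x hx
  refine llim_eq_of_Ioo (y := x - ε) (by linarith) fun t ht => ?_
  have : t ∈ J := by
    apply hball
    rw [Metric.mem_ball, Real.dist_eq, abs_lt]
    exact ⟨by rcases ht with ⟨h1,h2⟩; linarith, by rcases ht with ⟨h1,h2⟩; linarith⟩
  simp [sind, this]

lemma llim_convex_approach {J : Set ℝ} (hc : Convex ℝ J) (k : ℤ) {x y : ℝ}
    (hy : y ∈ J) (hyx : y < x)
    (happ : ∀ y' < x, ∃ t ∈ J, y' < t ∧ t < x) : llim (sind J k) x = k := by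
  refine llim_eq_of_Ioo hyx fun t ht => ?_
  obtain ⟨t', ht', h1, h2⟩ := happ t ht.2
  have : t ∈ J := hc.ordConnected.out hy ht' ⟨le_of_lt ht.1, le_of_lt h1⟩
  simp [sind, this]

lemma llim_zero_of_gap {J : Set ℝ} (k : ℤ) {x y' : ℝ} (hy' : y' < x)
    (hgap : ∀ t ∈ Set.Ioo y' x, t ∉ J) : llim (sind J k) x = 0 := by
  refine llim_eq_of_Ioo hy' fun t ht => ?_
  simp [sind, hgap t ht]

lemma jmp_mem_openConvex {J : Set ℝ} (ho : IsOpen J) (k : ℤ) {x : ℝ} (hx : x ∈ J) :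
    jmp (sind J k) x = 0 := by
  rw [jmp, llim_open_mem ho k hx]
  simp [sind, hx]

lemma jmp_zero_openConvex {J : Set ℝ} (hne : J.Nonempty) (hc : Convex ℝ J) (k : ℤ)
    {x : ℝ} (hx : x ∉ J) (hcase : ¬ BddAbove J ∨ x ≠ sSup J) : jmp (sind J k) x = 0 := by
  rw [jmp]
  have hfx : sind J k x = 0 := by simp [sind, hx]
  rw [hfx]
  by_cases hb : ∃ y ∈ J, y < x
  · obtain ⟨y, hy, hyx⟩ := hb
    have hJx : ∀ z ∈ J, z < x := by
      intro z hz
      rcases lt_trichotomy z x with h | h | h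
      · exact h
      · exact absurd (h ▸ hz) hx
      · exact absurd (hc.ordConnected.out hy hz ⟨le_of_lt hyx, le_of_lt h⟩) hx
    have hba : BddAbove J := ⟨x, fun z hz => le_of_lt (hJx z hz)⟩
    have hxs : x ≠ sSup J := by
      rcases hcase with h | h
      · exact absurd hba h
      · exact h
    have hsx : sSup J ≤ x := csSup_le hne fun z hz => le_of_lt (hJx z hz)
    have hslt : sSup J < x := lt_of_le_of_ne hsx (fun he => hxs he.symm)
    rw [llim_zero_of_gap k hslt fun t ht htJ => ?_]
    · ring
    · exact absurd (le_csSup hba htJ) (not_le.2 ht.1)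
  · push_neg at hb
    rw [llim_zero_of_gap k (show x - 1 < x by linarith) fun t ht htJ => ?_]
    · ring
    · exact absurd (hb t htJ) (not_le.2 ht.2)

lemma lval_openConvex {J : Set ℝ} (hne : J.Nonempty) (hc : Convex ℝ J) (k : ℤ) :
    lval (sind J k) = if BddBelow J then 0 else k := by
  obtain ⟨y₀, hy₀⟩ := hne
  by_cases hbb : BddBelow J
  · rw [if_pos hbb]
    obtain ⟨m, hm⟩ := hbb
    apply elimF_eq
    filter_upwards [eventually_lt_atBot m] with t ht
    have : t ∉ J := fun h => absurd (hm h) (not_le.2 ht)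
    simp [sind, this]
  · rw [if_neg hbb]
    apply elimF_eq
    filter_upwards [eventually_lt_atBot y₀] with t ht
    have hby : ∃ y ∈ J, y < t := by
      rw [bddBelow_def] at hbb
      push_neg at hbb
      obtain ⟨y, hy, hlt⟩ := hbb (t - 1)
      exact ⟨y, hy, by linarith⟩
    obtain ⟨y, hy, hyt⟩ := hby
    have : t ∈ J := hc.ordConnected.out hy hy₀ ⟨le_of_lt hyt, le_of_lt ht⟩
    simp [sind, this]

lemma supp_jmp_openConvex {J : Set ℝ} (hne : J.Nonempty) (ho : IsOpen J) (hc : Convex ℝ J)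
    (k : ℤ) : Function.support (jmp (sind J k)) ⊆ {sSup J} := by
  intro x hx
  simp only [Function.mem_support] at hx
  by_contra hxb
  simp only [Set.mem_singleton_iff] at hxb
  by_cases hxJ : x ∈ J
  · exact hx (jmp_mem_openConvex ho k hxJ)
  · exact hx (jmp_zero_openConvex hne hc k hxJ (Or.inr hxb))

/-- the key computation: value of the valuation on the indicator of a
nonempty open convex subset of `ℝ`. -/
lemma vv_openConvex {J : Set ℝ} (hne : J.Nonempty) (ho : IsOpen J) (hc : Convex ℝ J) (k : ℤ) :
    vv (sind J k) = (if BddBelow J then 0 else k) + (if BddAbove J then -k else 0) := by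
  obtain ⟨y₀, hy₀⟩ := hne
  by_cases hba : BddAbove J
  · set b := sSup J with hb
    have hbJ : b ∉ J := by
      intro hbm
      obtain ⟨ε, hε, hball⟩ := Metric.isOpen_iff.1 ho b hbm
      have : b + ε / 2 ∈ J := by
        apply hball
        rw [Metric.mem_ball, Real.dist_eq]
        rw [abs_of_pos (by linarith : (0:ℝ) < b + ε/2 - b)]
        linarith
      have := le_csSup hba this
      linarith
    have hjb : jmp (sind J k) b = -k := by
      have hyb : y₀ < b := lt_of_le_of_ne (le_csSup hba hy₀) (fun h => hbJ (h ▸ hy₀))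
      have happ : ∀ y' < b, ∃ t ∈ J, y' < t ∧ t < b := by
        intro y' hy'
        obtain ⟨t, htJ, hty'⟩ := exists_lt_of_lt_csSup ⟨y₀, hy₀⟩ hy'
        exact ⟨t, htJ, hty', lt_of_le_of_ne (le_csSup hba htJ) (fun h => hbJ (h ▸ htJ))⟩
      rw [jmp, llim_convex_approach hc k hy₀ hyb happ]
      simp [sind, hbJ]
    have hsum : ∑ᶠ x, jmp (sind J k) x = -k := by
      rw [finsum_eq_single _ b, hjb]
      intro x hxb
      by_cases hxJ : x ∈ J
      · exact jmp_mem_openConvex ho k hxJ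
      · exact jmp_zero_openConvex ⟨y₀, hy₀⟩ hc k hxJ (Or.inr hxb)
    rw [vv, lval_openConvex ⟨y₀, hy₀⟩ hc k, hsum, if_pos hba]
  · have hsum : ∑ᶠ x, jmp (sind J k) x = 0 := by
      apply finsum_eq_zero_of_forall_eq_zero
      intro x
      by_cases hxJ : x ∈ J
      · exact jmp_mem_openConvex ho k hxJ
      · exact jmp_zero_openConvex ⟨y₀, hy₀⟩ hc k hxJ (Or.inl hba)
    rw [vv, lval_openConvex ⟨y₀, hy₀⟩ hc k, hsum, if_neg hba]

lemma tameF_openConvex {J : Set ℝ} (ho : IsOpen J) (hc : Convex ℝ J) (k : ℤ) :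
    TameF (sind J k) := by
  rcases Set.eq_empty_or_nonempty J with he | hne
  · have : sind J k = fun _ => (0:ℤ) := by funext t; simp [sind, he]
    rw [this]; exact tameF_const 0
  refine ⟨?_, ?_, ?_⟩
  · rcases lval_openConvex hne hc k with h
    by_cases hbb : BddBelow J
    · obtain ⟨m, hm⟩ := hbb
      refine ⟨0, ?_⟩
      filter_upwards [eventually_lt_atBot m] with t ht
      have : t ∉ J := fun h => absurd (hm h) (not_le.2 ht)
      simp [sind, this]
    · obtain ⟨y₀, hy₀⟩ := hne
      refine ⟨k, ?_⟩
      filter_upwards [eventually_lt_atBot y₀] with t ht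
      have hby : ∃ y ∈ J, y < t := by
        rw [bddBelow_def] at hbb
        push_neg at hbb
        obtain ⟨y, hy, hlt⟩ := hbb (t - 1)
        exact ⟨y, hy, by linarith⟩
      obtain ⟨y, hy, hyt⟩ := hby
      have : t ∈ J := hc.ordConnected.out hy hy₀ ⟨le_of_lt hyt, le_of_lt ht⟩
      simp [sind, this]
  · intro x
    rcases ev_openConvex ho hc k x with h | h
    · exact ⟨k, h⟩
    · exact ⟨0, h⟩
  · exact (Set.finite_singleton _).subset (supp_jmp_openConvex hne ho hc k)

/-! ### The iterated valuation -/

def chi : (n : ℕ) → ((Fin n → ℝ) → ℤ) → ℤ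
  | 0, f => f (fun i => i.elim0)
  | n+1, f => vv (fun t => chi n (fun y => f (Fin.cons t y)))

def TameN : (n : ℕ) → ((Fin n → ℝ) → ℤ) → Prop
  | 0, _ => True
  | n+1, f => (∀ t, TameN n (fun y => f (Fin.cons t y))) ∧
      TameF (fun t => chi n (fun y => f (Fin.cons t y)))

lemma chi_congr : ∀ (n : ℕ) (f g : (Fin n → ℝ) → ℤ), (∀ p, f p = g p) → chi n f = chi n g :=
  fun n f g h => by rw [show f = g from funext h]

lemma chi_const : ∀ (n : ℕ) (c : ℤ), chi n (fun _ => c) = c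
  | 0, c => rfl
  | n+1, c => by
      show vv (fun t => chi n (fun _ => c)) = c
      have : ∀ t : ℝ, chi n (fun _ : Fin n → ℝ => c) = c := fun _ => chi_const n c
      rw [show (fun t : ℝ => chi n (fun _ : Fin n → ℝ => c)) = fun _ : ℝ => c from
        funext fun t => this t]
      exact vv_const c

lemma tameN_const : ∀ (n : ℕ) (c : ℤ), TameN n (fun _ => c)
  | 0, _ => trivial
  | n+1, c => by
      refine ⟨fun t => tameN_const n c, ?_⟩
      rw [show (fun t : ℝ => chi n (fun _ : Fin n → ℝ => c)) = fun _ : ℝ => c from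
        funext fun t => chi_const n c]
      exact tameF_const c

lemma chi_tame_add : ∀ (n : ℕ) (f g : (Fin n → ℝ) → ℤ), TameN n f → TameN n g →
    TameN n (fun p => f p + g p) ∧ chi n (fun p => f p + g p) = chi n f + chi n g
  | 0, f, g, _, _ => ⟨trivial, rfl⟩
  | n+1, f, g, hf, hg => by
      have hsl : ∀ t : ℝ,
          TameN n (fun y => f (Fin.cons t y) + g (Fin.cons t y)) ∧
          chi n (fun y => f (Fin.cons t y) + g (Fin.cons t y)) =
            chi n (fun y => f (Fin.cons t y)) + chi n (fun y => g (Fin.cons t y)) :=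
        fun t => chi_tame_add n _ _ (hf.1 t) (hg.1 t)
      have hfun : (fun t : ℝ => chi n (fun y => f (Fin.cons t y) + g (Fin.cons t y))) =
          (fun t : ℝ => chi n (fun y => f (Fin.cons t y))) +
          (fun t : ℝ => chi n (fun y => g (Fin.cons t y))) :=
        funext fun t => (hsl t).2
      constructor
      · refine ⟨fun t => (hsl t).1, ?_⟩
        show TameF (fun t : ℝ => chi n (fun y => f (Fin.cons t y) + g (Fin.cons t y)))
        rw [hfun]
        exact tameF_add hf.2 hg.2
      · show vv (fun t => chi n (fun y => f (Fin.cons t y) + g (Fin.cons t y))) = _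
        rw [hfun]
        exact vv_add hf.2 hg.2

lemma chi_tame_sum {ι : Type*} (n : ℕ) (s : Finset ι) (g : ι → (Fin n → ℝ) → ℤ)
    (hg : ∀ i ∈ s, TameN n (g i)) :
    TameN n (fun p => ∑ i ∈ s, g i p) ∧ chi n (fun p => ∑ i ∈ s, g i p) = ∑ i ∈ s, chi n (g i) := by
  classical
  induction s using Finset.induction_on with
  | empty =>
      simp only [Finset.sum_empty]
      exact ⟨tameN_const n 0, chi_const n 0⟩
  | @insert a s' hx ih =>
      have h1 := ih (fun i hi => hg i (Finset.mem_insert_of_mem hi))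
      have h2 := hg a (Finset.mem_insert_self a s')
      have hstep := chi_tame_add n (g a) (fun p => ∑ i ∈ s', g i p) h2 h1.1
      constructor
      · have := hstep.1
        have he : (fun p : Fin n → ℝ => ∑ i ∈ insert a s', g i p) =
            (fun p => g a p + (fun p => ∑ i ∈ s', g i p) p) :=
          funext fun p => Finset.sum_insert hx
        rw [he]
        exact this
      · have : chi n (fun p => ∑ i ∈ insert a s', g i p) =
            chi n (fun p => g a p + ∑ i ∈ s', g i p) :=
          chi_congr n _ _ fun p => Finset.sum_insert hx
        rw [this, hstep.2, h1.2, Finset.sum_insert hx]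

/-! ### slicing helpers -/

lemma cons_decomp {n : ℕ} (t : ℝ) (y : Fin n → ℝ) :
    (Fin.cons t y : Fin (n+1) → ℝ) =
      t • (Fin.cons 1 (0 : Fin n → ℝ) : Fin (n+1) → ℝ) +
        (Fin.cons 0 y : Fin (n+1) → ℝ) := by
  funext i
  refine Fin.cases ?_ (fun j => ?_) i <;> simp

lemma linmap_cons {n : ℕ} (f : (Fin (n+1) → ℝ) →ₗ[ℝ] ℝ) (t : ℝ) (y : Fin n → ℝ) :
    f (Fin.cons t y) = t * f (Fin.cons 1 (0 : Fin n → ℝ)) + f (Fin.cons 0 y) := by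
  rw [cons_decomp, map_add, map_smul]
  simp

lemma cons_zero_tail {n : ℕ} (d : Fin (n+1) → ℝ) (hd : d 0 = 0) :
    (Fin.cons 0 (Fin.tail d) : Fin (n+1) → ℝ) = d := by
  funext i
  refine Fin.cases ?_ (fun j => ?_) i
  · simp [hd.symm]
  · simp [Fin.tail]

/-! ### recession directions via compactness -/

lemma unbounded_of_ray {n : ℕ} {S : Set (Fin n → ℝ)} {x₀ d : Fin n → ℝ} (hd : d ≠ 0)
    (h : ∀ r : ℝ, 0 ≤ r → x₀ + r • d ∈ S) : ¬ Bornology.IsBounded S := by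
  intro hb
  obtain ⟨R, hR⟩ := isBounded_iff_forall_norm_le.1 hb
  have hdpos : (0:ℝ) < ‖d‖ := norm_pos_iff.2 hd
  set r : ℝ := (R + ‖x₀‖ + 1) / ‖d‖ with hr
  have hrpos : 0 ≤ r := by
    apply div_nonneg _ (le_of_lt hdpos)
    have : (0:ℝ) ≤ ‖x₀‖ := norm_nonneg _
    have hR0 : (0:ℝ) ≤ R := le_trans (norm_nonneg _) (hR _ (by simpa using h 0 le_rfl))
    linarith
  have hm := hR _ (h r hrpos)
  have h1 : ‖r • d‖ ≤ ‖x₀ + r • d‖ + ‖x₀‖ := by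
    have := norm_sub_le (x₀ + r • d) x₀
    simpa using this
  have h2 : ‖r • d‖ = r * ‖d‖ := by
    rw [norm_smul, Real.norm_eq_abs, abs_of_nonneg hrpos]
  have h3 : r * ‖d‖ = R + ‖x₀‖ + 1 := by
    rw [hr, div_mul_cancel₀]
    exact ne_of_gt hdpos
  rw [h2, h3] at h1
  linarith

lemma exists_recession_aux {n : ℕ} {ι : Type*} (s : Finset ι)
    (f : ι → (Fin n → ℝ) →ₗ[ℝ] ℝ) (c : ι → ℝ) (x : ℕ → Fin n → ℝ)
    (hx : ∀ k, ∀ i ∈ s, f i (x k) < c i)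
    (hn : ∀ k : ℕ, (k : ℝ) + 1 ≤ ‖x k‖) :
    ∃ (d : Fin n → ℝ) (φ : ℕ → ℕ), ‖d‖ = 1 ∧ (∀ i ∈ s, f i d ≤ 0) ∧ StrictMono φ ∧
      Filter.Tendsto (fun k => ‖x (φ k)‖⁻¹ • x (φ k)) atTop (𝓝 d) := by
  have hpos : ∀ k, (0:ℝ) < ‖x k‖ := fun k =>
    lt_of_lt_of_le (by positivity) (hn k)
  set u : ℕ → Fin n → ℝ := fun k => ‖x k‖⁻¹ • x k with hu_def
  have hu : ∀ k, u k ∈ Metric.sphere (0 : Fin n → ℝ) 1 := by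
    intro k
    simp only [Metric.mem_sphere, dist_zero_right, hu_def, norm_smul, norm_inv,
      norm_norm]
    exact inv_mul_cancel₀ (ne_of_gt (hpos k))
  obtain ⟨d, hd, φ, hφ, hconv⟩ := (isCompact_sphere (0 : Fin n → ℝ) 1).tendsto_subseq hu
  have hnormx : Filter.Tendsto (fun k => ‖x (φ k)‖) atTop atTop := by
    apply tendsto_atTop_mono (fun k => hn (φ k))
    have h0 : Filter.Tendsto (fun k : ℕ => ((φ k : ℝ))) atTop atTop :=
      tendsto_natCast_atTop_atTop.comp hφ.tendsto_atTop
    exact Filter.tendsto_atTop_add_const_right atTop 1 h0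
  refine ⟨d, φ, ?_, ?_, hφ, hconv⟩
  · simpa [dist_zero_right] using hd
  · intro i hi
    have h1 : Filter.Tendsto (fun k => f i (u (φ k))) atTop (𝓝 (f i d)) :=
      ((LinearMap.continuous_of_finiteDimensional (f i)).tendsto d).comp hconv
    have h2 : ∀ k, f i (u (φ k)) ≤ ‖x (φ k)‖⁻¹ * c i := by
      intro k
      have he : f i (u (φ k)) = ‖x (φ k)‖⁻¹ * f i (x (φ k)) := by
        simp [hu_def, map_smul]
      rw [he]
      exact mul_le_mul_of_nonneg_left (le_of_lt (hx (φ k) i hi))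
        (inv_nonneg.2 (norm_nonneg _))
    have h3 : Filter.Tendsto (fun k => ‖x (φ k)‖⁻¹ * c i) atTop (𝓝 0) := by
      have hinv : Filter.Tendsto (fun k => ‖x (φ k)‖⁻¹) atTop (𝓝 0) :=
        hnormx.inv_tendsto_atTop
      have := hinv.mul_const (c i)
      simpa using this
    exact le_of_tendsto_of_tendsto' h1 h3 h2

lemma exists_recession {n : ℕ} {ι : Type*} (s : Finset ι)
    (f : ι → (Fin n → ℝ) →ₗ[ℝ] ℝ) (c : ι → ℝ)
    (hC : ¬ Bornology.IsBounded {x : Fin n → ℝ | ∀ i ∈ s, f i x < c i}) :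
    ∃ d : Fin n → ℝ, ‖d‖ = 1 ∧ ∀ i ∈ s, f i d ≤ 0 := by
  have hseq : ∀ k : ℕ, ∃ x : Fin n → ℝ, (∀ i ∈ s, f i x < c i) ∧ (k : ℝ) + 1 ≤ ‖x‖ := by
    intro k
    by_contra hcon
    push_neg at hcon
    apply hC
    rw [isBounded_iff_forall_norm_le]
    exact ⟨(k : ℝ) + 1, fun x hx => le_of_lt (hcon x hx)⟩
  choose x hx1 hx2 using hseq
  obtain ⟨d, φ, hd1, hd2, _, _⟩ := exists_recession_aux s f c x hx1 hx2
  exact ⟨d, hd1, hd2⟩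

lemma exists_recession_sign {n : ℕ} {ι : Type*} (s : Finset ι)
    (f : ι → (Fin (n+1) → ℝ) →ₗ[ℝ] ℝ) (c : ι → ℝ) (ε : ℝ) (hε : ε = 1 ∨ ε = -1)
    (x : ℕ → Fin (n+1) → ℝ) (hx : ∀ k, ∀ i ∈ s, f i (x k) < c i)
    (hsgn : ∀ k : ℕ, (k : ℝ) + 1 ≤ ε * x k 0) :
    ∃ d : Fin (n+1) → ℝ, ‖d‖ = 1 ∧ (∀ i ∈ s, f i d ≤ 0) ∧ 0 ≤ ε * d 0 := by
  have hεabs : |ε| = 1 := by rcases hε with h | h <;> simp [h]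
  have hn : ∀ k : ℕ, (k : ℝ) + 1 ≤ ‖x k‖ := by
    intro k
    calc (k : ℝ) + 1 ≤ ε * x k 0 := hsgn k
    _ ≤ |ε * x k 0| := le_abs_self _
    _ = |x k 0| := by rw [abs_mul, hεabs, one_mul]
    _ ≤ ‖x k‖ := by
        have := norm_le_pi_norm (x k) 0
        simpa using this
  obtain ⟨d, φ, hd1, hd2, hφ, hconv⟩ := exists_recession_aux s f c x hx hn
  refine ⟨d, hd1, hd2, ?_⟩
  have hpos : ∀ k, (0:ℝ) < ‖x k‖ := fun k => lt_of_lt_of_le (by positivity) (hn k)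
  have h1 : Filter.Tendsto (fun k => ε * ((‖x (φ k)‖⁻¹ • x (φ k)) 0)) atTop (𝓝 (ε * d 0)) := by
    have hc : Continuous (fun v : Fin (n+1) → ℝ => ε * v 0) :=
      continuous_const.mul (continuous_apply 0)
    exact (hc.tendsto d).comp hconv
  refine ge_of_tendsto h1 ?_
  apply Filter.Eventually.of_forall
  intro k
  have : ε * ((‖x (φ k)‖⁻¹ • x (φ k)) 0) = ‖x (φ k)‖⁻¹ * (ε * x (φ k) 0) := by
    simp [Pi.smul_apply, smul_eq_mul]; ring
  rw [this]
  have hk : (0:ℝ) ≤ ε * x (φ k) 0 := le_trans (by positivity) (hsgn (φ k))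
  positivity

/-! ### affine sets -/

def AffSet {W : Type*} [AddCommGroup W] [Module ℝ W] (X : Set W) : Prop :=
  ∀ x ∈ X, ∀ y ∈ X, ∀ t : ℝ, x + t • (y - x) ∈ X

lemma affSet_univ {W : Type*} [AddCommGroup W] [Module ℝ W] : AffSet (Set.univ : Set W) :=
  fun _ _ _ _ _ => trivial

lemma affSet_hyperplane {W : Type*} [AddCommGroup W] [Module ℝ W]
    (f : W →ₗ[ℝ] ℝ) (c : ℝ) : AffSet {x | f x = c} := by
  intro x hx y hy t
  simp only [Set.mem_setOf_eq] at *
  rw [map_add, map_smul, map_sub, hx, hy]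
  simp

lemma affSet_inter {W : Type*} [AddCommGroup W] [Module ℝ W] {X Y : Set W}
    (hX : AffSet X) (hY : AffSet Y) : AffSet (X ∩ Y) :=
  fun x hx y hy t => ⟨hX x hx.1 y hy.1 t, hY x hx.2 y hy.2 t⟩

lemma affSet_biInter {W : Type*} [AddCommGroup W] [Module ℝ W] {ι : Type*}
    {s : Set ι} {X : ι → Set W} (h : ∀ i ∈ s, AffSet (X i)) :
    AffSet (⋂ i ∈ s, X i) := by
  intro x hx y hy t
  simp only [Set.mem_iInter] at *
  exact fun i hi => h i hi x (hx i hi) y (hy i hi) t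

lemma affSet_slice {n : ℕ} {X : Set (Fin (n+1) → ℝ)} (hX : AffSet X) (t : ℝ) :
    AffSet {y : Fin n → ℝ | Fin.cons t y ∈ X} := by
  intro y hy y' hy' s
  simp only [Set.mem_setOf_eq] at *
  have he : (Fin.cons t (y + s • (y' - y)) : Fin (n+1) → ℝ) =
      Fin.cons t y + s • (Fin.cons t y' - Fin.cons t y) := by
    funext i
    refine Fin.cases ?_ (fun j => ?_) i <;> simp
  rw [he]
  exact hX _ hy _ hy' s

/-- `chi` of the indicator of a nonempty affine set is the coefficient. -/
lemma chi_affSet : ∀ (n : ℕ) (X : Set (Fin n → ℝ)), AffSet X → X.Nonempty → ∀ k : ℤ,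
    TameN n (sind X k) ∧ chi n (sind X k) = k
  | 0, X, _, hne, k => by
      obtain ⟨x, hx⟩ := hne
      have hx0 : (fun i : Fin 0 => i.elim0) ∈ X := by
        have : x = (fun i : Fin 0 => i.elim0) := funext fun i => i.elim0
        rwa [this] at hx
      exact ⟨trivial, by simp [chi, sind, hx0]⟩
  | n+1, X, hX, hne, k => by
      have hslice : ∀ t : ℝ, (fun y => sind X k (Fin.cons t y)) =
          sind {y : Fin n → ℝ | Fin.cons t y ∈ X} k := fun t => rfl
      set T : Set ℝ := (fun x : Fin (n+1) → ℝ => x 0) '' X with hT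
      have hTaff : ∀ a ∈ T, ∀ b ∈ T, ∀ s : ℝ, a + s * (b - a) ∈ T := by
        rintro a ⟨x, hx, rfl⟩ b ⟨y, hy, rfl⟩ s
        exact ⟨x + s • (y - x), hX x hx y hy s, by simp⟩
      have hnsl : ∀ t : ℝ, t ∈ T ↔ Set.Nonempty {y : Fin n → ℝ | Fin.cons t y ∈ X} := by
        intro t
        constructor
        · rintro ⟨x, hx, rfl⟩
          refine ⟨Fin.tail x, ?_⟩
          simp only [Set.mem_setOf_eq]
          rwa [Fin.cons_self_tail]
        · rintro ⟨y, hy⟩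
          exact ⟨Fin.cons t y, hy, by simp⟩
      obtain ⟨x₀, hx₀⟩ := hne
      have ha : x₀ 0 ∈ T := ⟨x₀, hx₀, rfl⟩
      set a := x₀ 0
      by_cases hb : ∃ b ∈ T, b ≠ a
      · -- T = univ
        obtain ⟨b, hbT, hba⟩ := hb
        have hTuniv : ∀ t : ℝ, t ∈ T := by
          intro t
          have := hTaff a ha b hbT ((t - a) / (b - a))
          rwa [div_mul_cancel₀ _ (sub_ne_zero.2 hba), add_sub_cancel] at this
        have hIH : ∀ t : ℝ, TameN n (sind {y : Fin n → ℝ | Fin.cons t y ∈ X} k) ∧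
            chi n (sind {y : Fin n → ℝ | Fin.cons t y ∈ X} k) = k :=
          fun t => chi_affSet n _ (affSet_slice hX t) ((hnsl t).1 (hTuniv t)) k
        have hg : (fun t : ℝ => chi n (fun y => sind X k (Fin.cons t y))) = fun _ => k := by
          funext t
          rw [hslice t, (hIH t).2]
        constructor
        · refine ⟨fun t => ?_, ?_⟩
          · rw [hslice t]; exact (hIH t).1
          · rw [hg]; exact tameF_const k
        · show vv (fun t => chi n (fun y => sind X k (Fin.cons t y))) = k
          rw [hg]; exact vv_const k
      · -- T = {a}
        push_neg at hb
        have hg : (fun t : ℝ => chi n (fun y => sind X k (Fin.cons t y))) = sind {a} k := by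
          funext t
          rw [hslice t]
          by_cases ht : t = a
          · have htT : t ∈ T := by rw [ht]; exact ha
            rw [(chi_affSet n _ (affSet_slice hX t) ((hnsl t).1 htT) k).2]
            simp [sind, ht]
          · have hemp : {y : Fin n → ℝ | Fin.cons t y ∈ X} = ∅ := by
              rw [Set.eq_empty_iff_forall_notMem]
              intro y hy
              exact ht (hb t ((hnsl t).2 ⟨y, hy⟩))
            rw [hemp]
            have : sind (∅ : Set (Fin n → ℝ)) k = fun _ => (0:ℤ) := by
              funext y; simp [sind]
            rw [this, chi_const]
            simp [sind, ht]
        constructor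
        · refine ⟨fun t => ?_, ?_⟩
          · rw [hslice t]
            by_cases ht : t = a
            · have htT : t ∈ T := by rw [ht]; exact ha
              exact (chi_affSet n _ (affSet_slice hX t) ((hnsl t).1 htT) k).1
            · have hemp : {y : Fin n → ℝ | Fin.cons t y ∈ X} = ∅ := by
                rw [Set.eq_empty_iff_forall_notMem]
                intro y hy
                exact ht (hb t ((hnsl t).2 ⟨y, hy⟩))
              rw [hemp]
              have : sind (∅ : Set (Fin n → ℝ)) k = fun _ => (0:ℤ) := by
                funext y; simp [sind]
              rw [this]
              exact tameN_const n 0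
          · show TameF (fun t : ℝ => chi n (fun y => sind X k (Fin.cons t y)))
            rw [hg]
            exact tameF_sind_singleton a k
        · show vv (fun t => chi n (fun y => sind X k (Fin.cons t y))) = k
          rw [hg]
          exact vv_sind_singleton a k

/-! ### chambers: open polyhedra with pointed recession cone -/

def consLM (n : ℕ) : (Fin n → ℝ) →ₗ[ℝ] (Fin (n+1) → ℝ) where
  toFun y := Fin.cons 0 y
  map_add' y z := by
    funext i
    refine Fin.cases ?_ (fun j => ?_) i <;> simp
  map_smul' r y := by
    funext i
    refine Fin.cases ?_ (fun j => ?_) i <;> simp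

lemma consLM_apply {n : ℕ} (y : Fin n → ℝ) : consLM n y = Fin.cons 0 y := rfl

lemma cons_zero_eq_zero {n : ℕ} {y : Fin n → ℝ}
    (h : (Fin.cons 0 y : Fin (n+1) → ℝ) = 0) : y = 0 := by
  funext j
  have := congrFun h j.succ
  simpa using this

lemma chi_chamber : ∀ (n : ℕ) {ι : Type} (s : Finset ι)
    (f : ι → (Fin n → ℝ) →ₗ[ℝ] ℝ) (c : ι → ℝ)
    (_ : ∀ d : Fin n → ℝ, (∀ i ∈ s, f i d = 0) → d = 0)
    (_ : Set.Nonempty {x | ∀ i ∈ s, f i x < c i}) (k : ℤ),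
    TameN n (sind {x | ∀ i ∈ s, f i x < c i} k) ∧
    chi n (sind {x | ∀ i ∈ s, f i x < c i} k) =
      if Bornology.IsBounded {x | ∀ i ∈ s, f i x < c i} then (-1)^n * k else 0
  | 0, ι, s, f, c, hpt, hne, k => by
      set C := {x : Fin 0 → ℝ | ∀ i ∈ s, f i x < c i} with hC
      obtain ⟨x₀, hx₀⟩ := hne
      have hpt0 : (fun i : Fin 0 => i.elim0) ∈ C := by
        have : x₀ = (fun i : Fin 0 => i.elim0) := funext fun i => i.elim0
        rwa [this] at hx₀
      have hbdd : Bornology.IsBounded C := by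
        have : C ⊆ {(fun i : Fin 0 => i.elim0)} := by
          intro x _
          exact funext fun i => i.elim0
        exact (Set.finite_singleton _).isBounded.subset this
      refine ⟨trivial, ?_⟩
      rw [if_pos hbdd]
      simp [chi, sind, hpt0]
  | n+1, ι, s, f, c, hpt, hne, k => by
      set C := {x : Fin (n+1) → ℝ | ∀ i ∈ s, f i x < c i} with hC
      set a : ι → ℝ := fun i => f i (Fin.cons 1 (0 : Fin n → ℝ)) with ha
      set g : ι → (Fin n → ℝ) →ₗ[ℝ] ℝ := fun i => (f i).comp (consLM n) with hg
      have hga : ∀ i (t : ℝ) (y : Fin n → ℝ), f i (Fin.cons t y) = t * a i + g i y := by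
        intro i t y
        rw [linmap_cons]
        rfl
      set Sl : ℝ → Set (Fin n → ℝ) := fun t => {y | ∀ i ∈ s, g i y < c i - t * a i} with hSl
      have hmem : ∀ (t : ℝ) (y : Fin n → ℝ), (Fin.cons t y ∈ C) ↔ y ∈ Sl t := by
        intro t y
        constructor
        · intro h i hi
          have := h i hi
          rw [hga i t y] at this
          linarith
        · intro h i hi
          have := h i hi
          rw [hga i t y]
          linarith
      -- slice functions of the indicator
      have hslfun : ∀ t : ℝ, (fun y => sind C k (Fin.cons t y)) = sind (Sl t) k := by
        intro t
        funext y
        simp only [sind]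
        by_cases h : Fin.cons t y ∈ C
        · rw [if_pos h, if_pos ((hmem t y).1 h)]
        · rw [if_neg h, if_neg (fun hy => h ((hmem t y).2 hy))]
      -- pointedness for slices
      have hptsl : ∀ d : Fin n → ℝ, (∀ i ∈ s, g i d = 0) → d = 0 := by
        intro d hd
        have h0 : (Fin.cons 0 d : Fin (n+1) → ℝ) = 0 :=
          hpt _ (fun i hi => hd i hi)
        exact cons_zero_eq_zero h0
      -- induction hypothesis for nonempty slices
      have hIH : ∀ t : ℝ, (Sl t).Nonempty →
          TameN n (sind (Sl t) k) ∧
          chi n (sind (Sl t) k) =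
            if Bornology.IsBounded (Sl t) then (-1)^n * k else 0 :=
        fun t hnet => chi_chamber n s g (fun i => c i - t * a i) hptsl hnet k
      have hemptySl : ∀ t : ℝ, Sl t = ∅ → sind (Sl t) k = fun _ => (0:ℤ) := by
        intro t h
        funext y
        simp [sind, h]
      obtain ⟨x₀, hx₀⟩ := hne
      -- the projection of C to the first coordinate
      set J : Set ℝ := {t | (Sl t).Nonempty} with hJ
      have hprojC : ∀ x ∈ C, x 0 ∈ J := by
        intro x hx
        refine ⟨Fin.tail x, ((hmem (x 0) (Fin.tail x)).1 ?_)⟩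
        rwa [Fin.cons_self_tail]
      by_cases hcase : ∃ d : Fin (n+1) → ℝ, d 0 = 0 ∧ d ≠ 0 ∧ ∀ i ∈ s, f i d ≤ 0
      · -- case (i): horizontal recession direction: everything unbounded
        obtain ⟨d, hd0, hdne, hdrec⟩ := hcase
        have hCunb : ¬ Bornology.IsBounded C := by
          apply unbounded_of_ray hdne (x₀ := x₀)
          intro r hr
          intro i hi
          have h1 : f i (x₀ + r • d) = f i x₀ + r * f i d := by
            rw [map_add, map_smul]; rfl
          have h2 := hx₀ i hi
          have h3 : r * f i d ≤ 0 := mul_nonpos_of_nonneg_of_nonpos hr (hdrec i hi)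
          rw [h1]; linarith
        have htail : Fin.tail d ≠ 0 := by
          intro h
          apply hdne
          rw [← Fin.cons_self_tail (α := fun _ => ℝ) d, h, hd0]
          funext i
          refine Fin.cases ?_ (fun j => ?_) i <;> simp
        have hslunb : ∀ t : ℝ, (Sl t).Nonempty → ¬ Bornology.IsBounded (Sl t) := by
          intro t ⟨y₀, hy₀⟩
          apply unbounded_of_ray htail (x₀ := y₀)
          intro r hr i hi
          have h1 : g i (y₀ + r • Fin.tail d) = g i y₀ + r * g i (Fin.tail d) := by
            rw [map_add, map_smul]; rfl
          have h2 : g i (Fin.tail d) = f i d := by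
            rw [hg]
            show f i (consLM n (Fin.tail d)) = f i d
            rw [consLM_apply, cons_zero_tail d hd0]
          have h3 := hy₀ i hi
          have h4 : r * g i (Fin.tail d) ≤ 0 := by
            rw [h2]; exact mul_nonpos_of_nonneg_of_nonpos hr (hdrec i hi)
          rw [h1]; linarith
        have hgfun : (fun t : ℝ => chi n (fun y => sind C k (Fin.cons t y))) =
            fun _ : ℝ => (0:ℤ) := by
          funext t
          rw [hslfun t]
          rcases Set.eq_empty_or_nonempty (Sl t) with he | hnet
          · rw [hemptySl t he, chi_const]
          · rw [(hIH t hnet).2, if_neg (hslunb t hnet)]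
        refine ⟨⟨fun t => ?_, ?_⟩, ?_⟩
        · rw [hslfun t]
          rcases Set.eq_empty_or_nonempty (Sl t) with he | hnet
          · rw [hemptySl t he]; exact tameN_const n 0
          · exact (hIH t hnet).1
        · show TameF (fun t : ℝ => chi n (fun y => sind C k (Fin.cons t y)))
          rw [hgfun]; exact tameF_const 0
        · show vv (fun t => chi n (fun y => sind C k (Fin.cons t y))) = _
          rw [hgfun, vv_const, if_neg hCunb]
      · -- case (ii): no horizontal recession direction
        push_neg at hcase
        have hcase' : ∀ d : Fin (n+1) → ℝ, d 0 = 0 → (∀ i ∈ s, f i d ≤ 0) → d = 0 := by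
          intro d h0 hrec
          by_contra hdne
          obtain ⟨i, hi, hlt⟩ := hcase d h0 hdne
          exact absurd (hrec i hi) (not_le.2 hlt)
        -- all nonempty slices are bounded
        have hslbdd : ∀ t : ℝ, (Sl t).Nonempty → Bornology.IsBounded (Sl t) := by
          intro t _
          by_contra hunb
          obtain ⟨d', hd'n, hd'r⟩ := exists_recession s g (fun i => c i - t * a i) hunb
          have h0 : d' = 0 := by
            apply cons_zero_eq_zero (y := d')
            apply hcase' _ (Fin.cons_zero _ _)
            intro i hi
            have : f i (Fin.cons (0:ℝ) d') = 0 * a i + g i d' := hga i 0 d'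
            rw [this, zero_mul, zero_add]
            exact hd'r i hi
          rw [h0] at hd'n
          simp at hd'n
        -- the sliced chi function is the indicator of J
        have hgfun : (fun t : ℝ => chi n (fun y => sind C k (Fin.cons t y))) =
            sind J ((-1)^n * k) := by
          funext t
          rw [hslfun t]
          by_cases ht : (Sl t).Nonempty
          · rw [(hIH t ht).2, if_pos (hslbdd t ht)]
            have htJ : t ∈ J := ht
            simp [sind, htJ]
          · rw [hemptySl t (Set.not_nonempty_iff_eq_empty.1 ht), chi_const]
            have htJ : t ∉ J := ht
            simp [sind, htJ]
        -- J is open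
        have hJopen : IsOpen J := by
          have hJu : J = ⋃ y : Fin n → ℝ, {t : ℝ | ∀ i ∈ s, g i y < c i - t * a i} := by
            ext t
            simp only [hJ, Set.mem_setOf_eq, Set.mem_iUnion, Set.Nonempty]
            rfl
          rw [hJu]
          apply isOpen_iUnion
          intro y
          have he : {t : ℝ | ∀ i ∈ s, g i y < c i - t * a i} =
              ⋂ i ∈ (s : Set ι), {t : ℝ | g i y < c i - t * a i} := by
            ext t; simp
          rw [he]
          apply s.finite_toSet.isOpen_biInter
          intro i _
          exact isOpen_lt continuous_const
            (continuous_const.sub (continuous_id.mul continuous_const))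
        -- J is convex
        have hJconv : Convex ℝ J := by
          intro t₁ ht₁ t₂ ht₂ p q hp hq hpq
          obtain ⟨y₁, hy₁⟩ := ht₁
          obtain ⟨y₂, hy₂⟩ := ht₂
          rcases eq_or_lt_of_le hp with hp0 | hp0
          · have hq1 : q = 1 := by linarith
            have he : p • t₁ + q • t₂ = t₂ := by rw [← hp0, hq1]; simp
            rw [he]; exact ⟨y₂, hy₂⟩
          rcases eq_or_lt_of_le hq with hq0 | hq0
          · have hp1 : p = 1 := by linarith
            have he : p • t₁ + q • t₂ = t₁ := by rw [← hq0, hp1]; simp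
            rw [he]; exact ⟨y₁, hy₁⟩
          refine ⟨p • y₁ + q • y₂, ?_⟩
          intro i hi
          have h1 := hy₁ i hi
          have h2 := hy₂ i hi
          have hgl : g i (p • y₁ + q • y₂) = p * g i y₁ + q * g i y₂ := by
            rw [map_add, map_smul, map_smul]; rfl
          rw [hgl]
          have key : c i - (p * t₁ + q * t₂) * a i =
              p * (c i - t₁ * a i) + q * (c i - t₂ * a i) := by
            have hp' : p = 1 - q := by linarith
            rw [hp']; ring
          have hsm : (p • t₁ + q • t₂ : ℝ) = p * t₁ + q * t₂ := rfl
          rw [hsm, key]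
          exact add_lt_add (mul_lt_mul_of_pos_left h1 hp0) (mul_lt_mul_of_pos_left h2 hq0)
        have hJne : J.Nonempty := ⟨x₀ 0, hprojC x₀ hx₀⟩
        -- bounded C forces bounded J
        have hCtoJ : Bornology.IsBounded C → BddBelow J ∧ BddAbove J := by
          intro hb
          obtain ⟨R, hR⟩ := isBounded_iff_forall_norm_le.1 hb
          have habs : ∀ t ∈ J, |t| ≤ R := by
            intro t ht
            obtain ⟨y, hy⟩ := ht
            have hxC : Fin.cons t y ∈ C := (hmem t y).2 hy
            have h0 : |t| ≤ ‖(Fin.cons t y : Fin (n+1) → ℝ)‖ := by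
              have := norm_le_pi_norm (Fin.cons t y : Fin (n+1) → ℝ) 0
              simpa using this
            exact le_trans h0 (hR _ hxC)
          constructor
          · exact ⟨-R, fun t ht => by have := habs t ht; rw [abs_le] at this; linarith⟩
          · exact ⟨R, fun t ht => by have := habs t ht; rw [abs_le] at this; linarith⟩
        -- rays inside C from recession directions
        have hrayC : ∀ d : Fin (n+1) → ℝ, (∀ i ∈ s, f i d ≤ 0) →
            ∀ r : ℝ, 0 ≤ r → x₀ + r • d ∈ C := by
          intro d hd r hr i hi
          have h1 : f i (x₀ + r • d) = f i x₀ + r * f i d := by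
            rw [map_add, map_smul]; rfl
          have h2 : f i x₀ < c i := hx₀ i hi
          have h3 : r * f i d ≤ 0 := mul_nonpos_of_nonneg_of_nonpos hr (hd i hi)
          show f i (x₀ + r • d) < c i
          rw [h1]
          linarith
        have hrayJ : ∀ d : Fin (n+1) → ℝ, (∀ i ∈ s, f i d ≤ 0) →
            ∀ r : ℝ, 0 ≤ r → x₀ 0 + r * d 0 ∈ J := by
          intro d hd r hr
          have := hprojC _ (hrayC d hd r hr)
          simpa using this
        -- main TameN/chi conclusion
        have hTame : TameF (fun t : ℝ => chi n (fun y => sind C k (Fin.cons t y))) := by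
          rw [hgfun]
          exact tameF_openConvex hJopen hJconv _
        refine ⟨⟨fun t => ?_, hTame⟩, ?_⟩
        · rw [hslfun t]
          rcases Set.eq_empty_or_nonempty (Sl t) with he | hnet
          · rw [hemptySl t he]; exact tameN_const n 0
          · exact (hIH t hnet).1
        show vv (fun t => chi n (fun y => sind C k (Fin.cons t y))) = _
        rw [hgfun, vv_openConvex hJne hJopen hJconv]
        by_cases hbb : BddBelow J <;> by_cases hba : BddAbove J
        · -- J bounded: C is bounded
          have hCb : Bornology.IsBounded C := by
            by_contra hub
            obtain ⟨d, hdn, hdr⟩ := exists_recession s f c hub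
            have hd0 : d 0 ≠ 0 := by
              intro h0
              have := hcase' d h0 hdr
              rw [this] at hdn
              simp at hdn
            rcases lt_or_gt_of_ne hd0 with hneg | hpos
            · obtain ⟨m, hm⟩ := hbb
              have hx0J : x₀ 0 ∈ J := hprojC x₀ hx₀
              have hmx : m ≤ x₀ 0 := hm hx0J
              set r : ℝ := (m - 1 - x₀ 0) / d 0 with hr
              have hrpos : 0 ≤ r := by
                rw [hr, div_nonneg_iff]
                right
                constructor <;> linarith
              have hmem2 := hm (hrayJ d hdr r hrpos)
              rw [hr, div_mul_cancel₀ _ (ne_of_lt hneg)] at hmem2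
              linarith
            · obtain ⟨M, hM⟩ := hba
              have hx0J : x₀ 0 ∈ J := hprojC x₀ hx₀
              have hmx : x₀ 0 ≤ M := hM hx0J
              set r : ℝ := (M + 1 - x₀ 0) / d 0 with hr
              have hrpos : 0 ≤ r := by
                apply div_nonneg _ (le_of_lt hpos)
                linarith
              have hmem2 := hM (hrayJ d hdr r hrpos)
              rw [hr, div_mul_cancel₀ _ (ne_of_gt hpos)] at hmem2
              linarith
          rw [if_pos hCb, if_pos hbb, if_pos hba]
          ring
        · have hCu : ¬ Bornology.IsBounded C := fun hb => hba (hCtoJ hb).2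
          rw [if_neg hCu, if_pos hbb, if_neg hba]
          ring
        · have hCu : ¬ Bornology.IsBounded C := fun hb => hbb (hCtoJ hb).1
          rw [if_neg hCu, if_neg hbb, if_pos hba]
          ring
        · -- J unbounded on both sides: contradiction with pointedness
          exfalso
          have hup : ∀ m : ℕ, ∃ x, x ∈ C ∧ (m:ℝ) + 1 ≤ 1 * x 0 := by
            intro m
            have h' : ¬ ∀ t ∈ J, t ≤ (m:ℝ)+1 := fun h => hba ⟨(m:ℝ)+1, h⟩
            push_neg at h'
            obtain ⟨t, htJ, hlt⟩ := h'
            obtain ⟨y, hy⟩ := htJ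
            refine ⟨Fin.cons t y, (hmem t y).2 hy, ?_⟩
            have hce : (Fin.cons t y : Fin (n+1) → ℝ) 0 = t := rfl
            rw [hce, one_mul]
            linarith
          have hdown : ∀ m : ℕ, ∃ x, x ∈ C ∧ (m:ℝ) + 1 ≤ (-1) * x 0 := by
            intro m
            have h' : ¬ ∀ t ∈ J, -((m:ℝ)+1) ≤ t := fun h => hbb ⟨-((m:ℝ)+1), h⟩
            push_neg at h'
            obtain ⟨t, htJ, hlt⟩ := h'
            obtain ⟨y, hy⟩ := htJ
            refine ⟨Fin.cons t y, (hmem t y).2 hy, ?_⟩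
            have hce : (Fin.cons t y : Fin (n+1) → ℝ) 0 = t := rfl
            rw [hce]
            linarith
          choose xu hxu1 hxu2 using hup
          choose xd hxd1 hxd2 using hdown
          obtain ⟨dp, hdpn, hdpr, hdp0⟩ :=
            exists_recession_sign s f c 1 (Or.inl rfl) xu (fun m => hxu1 m) hxu2
          obtain ⟨dm, hdmn, hdmr, hdm0⟩ :=
            exists_recession_sign s f c (-1) (Or.inr rfl) xd (fun m => hxd1 m) hxd2
          have hdp0' : 0 < dp 0 := by
            rcases lt_or_eq_of_le (by linarith [hdp0] : (0:ℝ) ≤ dp 0) with h | h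
            · exact h
            · exfalso
              have := hcase' dp h.symm hdpr
              rw [this] at hdpn
              simp at hdpn
          have hdm0' : dm 0 < 0 := by
            have hle : dm 0 ≤ 0 := by linarith [hdm0]
            rcases lt_or_eq_of_le hle with h | h
            · exact h
            · exfalso
              have := hcase' dm h hdmr
              rw [this] at hdmn
              simp at hdmn
          set e : Fin (n+1) → ℝ := (- dm 0) • dp + (dp 0) • dm with hee
          have he0 : e 0 = 0 := by
            simp only [hee, Pi.add_apply, Pi.smul_apply, smul_eq_mul]
            ring
          have herec : ∀ i ∈ s, f i e ≤ 0 := by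
            intro i hi
            have hexp : f i e = (- dm 0) * f i dp + (dp 0) * f i dm := by
              simp only [hee, map_add, map_smul, smul_eq_mul]
            rw [hexp]
            have t1 : (- dm 0) * f i dp ≤ 0 :=
              mul_nonpos_of_nonneg_of_nonpos (by linarith) (hdpr i hi)
            have t2 : (dp 0) * f i dm ≤ 0 :=
              mul_nonpos_of_nonneg_of_nonpos (le_of_lt hdp0') (hdmr i hi)
            linarith
          have he : e = 0 := hcase' e he0 herec
          have hzero : ∀ i ∈ s, f i dp = 0 := by
            intro i hi
            have hfe : f i e = 0 := by rw [he]; simp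
            have hexp : f i e = (- dm 0) * f i dp + (dp 0) * f i dm := by
              simp only [hee, map_add, map_smul, smul_eq_mul]
            rw [hexp] at hfe
            have t1 : (- dm 0) * f i dp ≤ 0 :=
              mul_nonpos_of_nonneg_of_nonpos (by linarith) (hdpr i hi)
            have t2 : (dp 0) * f i dm ≤ 0 :=
              mul_nonpos_of_nonneg_of_nonpos (le_of_lt hdp0') (hdmr i hi)
            have h1 : (- dm 0) * f i dp = 0 := by linarith
            rcases mul_eq_zero.1 h1 with h | h
            · exfalso; linarith
            · exact h
          have : dp = 0 := hpt dp hzero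
          rw [this] at hdpn
          simp at hdpn

/-! ### cells and chambers of an arrangement -/

variable {m : ℕ}

/-- chosen linear functional and constant for a hyperplane. -/
def hpF (H : Set (Fin m → ℝ)) : ((Fin m → ℝ) →ₗ[ℝ] ℝ) × ℝ :=
  if h : IsHyperplane ℝ H then ⟨h.choose, h.choose_spec.choose⟩ else ⟨0, 0⟩

lemma hpF_spec {H : Set (Fin m → ℝ)} (h : IsHyperplane ℝ H) :
    (hpF H).1 ≠ 0 ∧ H = {x | (hpF H).1 x = (hpF H).2} := by
  rw [hpF, dif_pos h]
  exact ⟨h.choose_spec.choose_spec.1, h.choose_spec.choose_spec.2⟩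

/-- the (open) cell of the arrangement `A` given by choosing sides `T ⊆ A`. -/
def cellT (A T : Finset (Set (Fin m → ℝ))) : Set (Fin m → ℝ) :=
  {x | ∀ H ∈ A, if H ∈ T then (hpF H).1 x < (hpF H).2 else (hpF H).2 < (hpF H).1 x}

def cells (A : Finset (Set (Fin m → ℝ))) : Finset (Set (Fin m → ℝ)) :=
  (A.powerset.image (cellT A)).filter (·.Nonempty)

/-- the side-selection of a point. -/
def sides (A : Finset (Set (Fin m → ℝ))) (p : Fin m → ℝ) : Finset (Set (Fin m → ℝ)) :=
  A.filter (fun H => (hpF H).1 p < (hpF H).2)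

section Cells

variable {A : Finset (Set (Fin m → ℝ))}

lemma mem_M_iff {p : Fin m → ℝ} :
    p ∈ Set.univ ∩ (⋃ H ∈ A, (H : Set (Fin m → ℝ)))ᶜ ↔ ∀ H ∈ A, p ∉ H := by
  simp

lemma cell_sub_M (hA : ∀ H ∈ A, IsHyperplane ℝ H)
    {T : Finset (Set (Fin m → ℝ))} {y : Fin m → ℝ} (hy : y ∈ cellT A T) :
    y ∈ Set.univ ∩ (⋃ H ∈ A, (H : Set (Fin m → ℝ)))ᶜ := by
  rw [mem_M_iff]
  intro H hH hyH
  have hs := hpF_spec (hA H hH)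
  have : (hpF H).1 y = (hpF H).2 := by
    have := hs.2 ▸ hyH
    exact this
  have h2 := hy H hH
  by_cases ht : H ∈ T
  · rw [if_pos ht] at h2; linarith
  · rw [if_neg ht] at h2; linarith

lemma mem_cell_sides (hA : ∀ H ∈ A, IsHyperplane ℝ H) {p : Fin m → ℝ}
    (hp : p ∈ Set.univ ∩ (⋃ H ∈ A, (H : Set (Fin m → ℝ)))ᶜ) :
    p ∈ cellT A (sides A p) := by
  intro H hH
  by_cases ht : H ∈ sides A p
  · rw [if_pos ht]
    exact (Finset.mem_filter.1 ht).2
  · rw [if_neg ht]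
    have hne : (hpF H).1 p ≠ (hpF H).2 := by
      intro he
      have := (mem_M_iff.1 hp) H hH
      apply this
      rw [(hpF_spec (hA H hH)).2]
      exact he
    have hnl : ¬ (hpF H).1 p < (hpF H).2 := by
      intro hl
      exact ht (Finset.mem_filter.2 ⟨hH, hl⟩)
    rcases lt_trichotomy ((hpF H).1 p) ((hpF H).2) with h | h | h
    · exact absurd h hnl
    · exact absurd h hne
    · exact h

lemma cellT_congr {T T' : Finset (Set (Fin m → ℝ))}
    (h : ∀ H ∈ A, (H ∈ T ↔ H ∈ T')) : cellT A T = cellT A T' := by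
  ext x
  constructor <;> intro hx H hH
  · have := hx H hH
    by_cases ht : H ∈ T'
    · rw [if_pos ht]; rw [if_pos ((h H hH).2 ht)] at this; exact this
    · rw [if_neg ht]; rw [if_neg (fun hT => ht ((h H hH).1 hT))] at this; exact this
  · have := hx H hH
    by_cases ht : H ∈ T
    · rw [if_pos ht]; rw [if_pos ((h H hH).1 ht)] at this; exact this
    · rw [if_neg ht]; rw [if_neg (fun hT => ht ((h H hH).2 hT))] at this; exact this

lemma cell_eq_of_mem {T : Finset (Set (Fin m → ℝ))} {x : Fin m → ℝ}
    (hx : x ∈ cellT A T) : cellT A T = cellT A (sides A x) := by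
  apply cellT_congr
  intro H hH
  have := hx H hH
  constructor
  · intro hT
    rw [if_pos hT] at this
    exact Finset.mem_filter.2 ⟨hH, this⟩
  · intro hS
    by_contra hT
    rw [if_neg hT] at this
    have := (Finset.mem_filter.1 hS).2
    linarith

lemma cellT_open (A T : Finset (Set (Fin m → ℝ))) : IsOpen (cellT A T) := by
  have he : cellT A T = ⋂ H ∈ (A : Set (Set (Fin m → ℝ))),
      (if H ∈ T then {x : Fin m → ℝ | (hpF H).1 x < (hpF H).2}
       else {x : Fin m → ℝ | (hpF H).2 < (hpF H).1 x}) := by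
    ext x
    simp only [cellT, Set.mem_setOf_eq, Set.mem_iInter, Finset.mem_coe]
    refine forall₂_congr fun H hH => ?_
    by_cases ht : H ∈ T <;> simp [ht]
  rw [he]
  apply A.finite_toSet.isOpen_biInter
  intro H _
  by_cases ht : H ∈ T
  · rw [if_pos ht]
    exact isOpen_lt (LinearMap.continuous_of_finiteDimensional _) continuous_const
  · rw [if_neg ht]
    exact isOpen_lt continuous_const (LinearMap.continuous_of_finiteDimensional _)

lemma cellT_convex (A T : Finset (Set (Fin m → ℝ))) : Convex ℝ (cellT A T) := by
  intro x hx y hy p q hp hq hpq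
  rcases eq_or_lt_of_le hp with hp0 | hp0
  · have hq1 : q = 1 := by linarith
    have he : p • x + q • y = y := by rw [← hp0, hq1]; simp
    rw [he]; exact hy
  rcases eq_or_lt_of_le hq with hq0 | hq0
  · have hp1 : p = 1 := by linarith
    have he : p • x + q • y = x := by rw [← hq0, hp1]; simp
    rw [he]; exact hx
  intro H hH
  have h1 := hx H hH
  have h2 := hy H hH
  have hl : (hpF H).1 (p • x + q • y) = p * (hpF H).1 x + q * (hpF H).1 y := by
    rw [map_add, map_smul, map_smul]; rfl
  have hsum : p * (hpF H).2 + q * (hpF H).2 = (hpF H).2 := by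
    rw [← add_mul, hpq, one_mul]
  by_cases ht : H ∈ T
  · rw [if_pos ht] at h1 h2 ⊢
    rw [hl]
    have e1 : p * (hpF H).1 x < p * (hpF H).2 := mul_lt_mul_of_pos_left h1 hp0
    have e2 : q * (hpF H).1 y < q * (hpF H).2 := mul_lt_mul_of_pos_left h2 hq0
    linarith
  · rw [if_neg ht] at h1 h2 ⊢
    rw [hl]
    have e1 : p * (hpF H).2 < p * (hpF H).1 x := mul_lt_mul_of_pos_left h1 hp0
    have e2 : q * (hpF H).2 < q * (hpF H).1 y := mul_lt_mul_of_pos_left h2 hq0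
    linarith

lemma comp_eq (hA : ∀ H ∈ A, IsHyperplane ℝ H) {x : Fin m → ℝ}
    (hx : x ∈ Set.univ ∩ (⋃ H ∈ A, (H : Set (Fin m → ℝ)))ᶜ) :
    connectedComponentIn (Set.univ ∩ (⋃ H ∈ A, (H : Set (Fin m → ℝ)))ᶜ) x
      = cellT A (sides A x) := by
  set M := Set.univ ∩ (⋃ H ∈ A, (H : Set (Fin m → ℝ)))ᶜ with hM
  set D := cellT A (sides A x) with hD
  have hxD : x ∈ D := mem_cell_sides hA hx
  have hDM : D ⊆ M := fun y hy => cell_sub_M hA hy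
  apply subset_antisymm
  · set S := connectedComponentIn M x with hS_def
    have hS : IsPreconnected S := isPreconnected_connectedComponentIn
    have hSM : S ⊆ M := connectedComponentIn_subset _ _
    set V := ⋃ (y : Fin m → ℝ) (_ : y ∈ M \ D), cellT A (sides A y) with hV
    have hVopen : IsOpen V := isOpen_iUnion fun y => isOpen_iUnion fun _ => cellT_open A _
    have hDopen : IsOpen D := cellT_open A (sides A x)
    have hcover : S ⊆ D ∪ V := by
      intro z hz
      have hzM := hSM hz
      by_cases hzD : z ∈ D
      · exact Or.inl hzD
      · exact Or.inr (Set.mem_iUnion₂.2 ⟨z, ⟨hzM, hzD⟩, mem_cell_sides hA hzM⟩)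
    have hdisj : ¬ (S ∩ (D ∩ V)).Nonempty := by
      rintro ⟨z, hzS, hzD, hzV⟩
      obtain ⟨y, hy, hzy⟩ := Set.mem_iUnion₂.1 hzV
      have h1 : cellT A (sides A y) = cellT A (sides A z) := cell_eq_of_mem hzy
      have h2 : D = cellT A (sides A z) := cell_eq_of_mem hzD
      have hyD : y ∈ D := by
        rw [hD] at h2 ⊢
        rw [h2, ← h1]
        exact mem_cell_sides hA hy.1
      exact hy.2 hyD
    by_cases hSV : (S ∩ V).Nonempty
    · exfalso
      exact hdisj (hS D V hDopen hVopen hcover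
        ⟨x, mem_connectedComponentIn hx, hxD⟩ hSV)
    · intro z hz
      rcases hcover hz with h | h
      · exact h
      · exact absurd ⟨z, hz, h⟩ hSV
  · exact (cellT_convex A _).isPreconnected.subset_connectedComponentIn hxD hDM

lemma sides_mem_cells (hA : ∀ H ∈ A, IsHyperplane ℝ H) {p : Fin m → ℝ}
    (hp : p ∈ Set.univ ∩ (⋃ H ∈ A, (H : Set (Fin m → ℝ)))ᶜ) :
    cellT A (sides A p) ∈ cells A := by
  rw [cells, Finset.mem_filter]
  refine ⟨Finset.mem_image.2 ⟨sides A p, Finset.mem_powerset.2 (Finset.filter_subset _ _), rfl⟩,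
    ⟨p, mem_cell_sides hA hp⟩⟩

lemma chamber_iff (hA : ∀ H ∈ A, IsHyperplane ℝ H) {C : Set (Fin m → ℝ)} :
    IsChamberIn Set.univ A C ↔ C ∈ cells A := by
  constructor
  · rintro ⟨x, hx, rfl⟩
    rw [comp_eq hA hx]
    exact sides_mem_cells hA hx
  · intro hC
    rw [cells, Finset.mem_filter] at hC
    obtain ⟨hC1, hne⟩ := hC
    obtain ⟨T, _, rfl⟩ := Finset.mem_image.1 hC1
    obtain ⟨x, hx⟩ := hne
    have hxM : x ∈ Set.univ ∩ (⋃ H ∈ A, (H : Set (Fin m → ℝ)))ᶜ := cell_sub_M hA hx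
    refine ⟨x, hxM, ?_⟩
    rw [comp_eq hA hxM]
    exact cell_eq_of_mem hx

lemma cells_partition (hA : ∀ H ∈ A, IsHyperplane ℝ H) (p : Fin m → ℝ) :
    (if p ∈ Set.univ ∩ (⋃ H ∈ A, (H : Set (Fin m → ℝ)))ᶜ then (1:ℤ) else 0)
      = ∑ C ∈ cells A, sind C 1 p := by
  by_cases hp : p ∈ Set.univ ∩ (⋃ H ∈ A, (H : Set (Fin m → ℝ)))ᶜ
  · rw [if_pos hp]
    rw [Finset.sum_eq_single (cellT A (sides A p))]
    · simp [sind, mem_cell_sides hA hp]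
    · intro C hC hne
      rw [cells, Finset.mem_filter] at hC
      obtain ⟨T, _, rfl⟩ := Finset.mem_image.1 hC.1
      have hpn : p ∉ cellT A T := by
        intro hmem
        exact hne (cell_eq_of_mem hmem)
      simp [sind, hpn]
    · intro hnm
      exact absurd (sides_mem_cells hA hp) hnm
  · rw [if_neg hp]
    symm
    apply Finset.sum_eq_zero
    intro C hC
    rw [cells, Finset.mem_filter] at hC
    obtain ⟨T, _, rfl⟩ := Finset.mem_image.1 hC.1
    have hpn : p ∉ cellT A T := fun hmem => hp (cell_sub_M hA hmem)
    simp [sind, hpn]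

end Cells

lemma affSet_biInterFinset {W : Type*} [AddCommGroup W] [Module ℝ W]
    {S : Finset (Set W)} (h : ∀ H ∈ S, AffSet H) : AffSet (⋂ H ∈ S, H) := by
  intro x hx y hy t
  simp only [Set.mem_iInter] at *
  exact fun H hH => h H hH x (hx H hH) y (hy H hH) t

lemma hyperplane_ne_univ {H : Set (Fin m → ℝ)} (h : IsHyperplane ℝ H) :
    H ≠ Set.univ := by
  obtain ⟨f, c, hf, hH⟩ := h
  intro he
  obtain ⟨z, hz⟩ := DFunLike.ne_iff.1 hf
  simp only [LinearMap.zero_apply] at hz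
  have hw : ∀ w : Fin m → ℝ, f w = c := by
    intro w
    have : w ∈ H := by rw [he]; trivial
    rwa [hH] at this
  have h1 : f z = c := hw z
  have h2 : f ((2:ℝ) • z) = c := hw _
  rw [map_smul, smul_eq_mul, h1] at h2
  have hc : c = 0 := by linarith
  rw [hc] at h1
  exact hz h1

lemma mobius_identity {A : Finset (Set (Fin m → ℝ))} (hA : ∀ H ∈ A, IsHyperplane ℝ H)
    (μ : Set (Fin m → ℝ) → ℤ) (hμ : IsMobiusIn Set.univ A μ) (p : Fin m → ℝ) :
    (∑ X ∈ interPosetIn Set.univ A, sind X (μ X) p)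
      = if p ∈ Set.univ ∩ (⋃ H ∈ A, (H : Set (Fin m → ℝ)))ᶜ then 1 else 0 := by
  classical
  set Sp := A.filter (fun H => p ∈ H) with hSp
  set Xp : Set (Fin m → ℝ) := Set.univ ∩ ⋂ H ∈ Sp, H with hXp
  have hpXp : p ∈ Xp := by
    refine ⟨trivial, Set.mem_iInter₂.2 fun H hH => ?_⟩
    exact (Finset.mem_filter.1 hH).2
  have hXpL : Xp ∈ interPosetIn Set.univ A := by
    rw [interPosetIn, Finset.mem_filter]
    exact ⟨Finset.mem_image.2 ⟨Sp, Finset.mem_powerset.2 (Finset.filter_subset _ _), rfl⟩,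
      ⟨p, hpXp⟩⟩
  have key : ∀ Y ∈ interPosetIn Set.univ A, (p ∈ Y ↔ Xp ⊆ Y) := by
    intro Y hY
    constructor
    · intro hpY
      rw [interPosetIn, Finset.mem_filter] at hY
      obtain ⟨S, hS, rfl⟩ := Finset.mem_image.1 hY.1
      intro z hz
      refine ⟨trivial, Set.mem_iInter₂.2 fun H hH => ?_⟩
      have hHSp : H ∈ Sp := Finset.mem_filter.2
        ⟨Finset.mem_powerset.1 hS hH, Set.mem_iInter₂.1 hpY.2 H hH⟩
      exact Set.mem_iInter₂.1 hz.2 H hHSp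
    · intro hXY
      exact hXY hpXp
  have h1 : (∑ X ∈ interPosetIn Set.univ A, sind X (μ X) p)
      = ∑ X ∈ (interPosetIn Set.univ A).filter (fun X => p ∈ X), μ X := by
    rw [Finset.sum_filter]
    apply Finset.sum_congr rfl
    intro X _
    simp [sind]
  have h2 : (interPosetIn Set.univ A).filter (fun X => p ∈ X)
      = (interPosetIn Set.univ A).filter (fun Y => Xp ⊆ Y) := by
    apply Finset.filter_congr
    intro Y hY
    simp only [key Y hY]
  rw [h1, h2, hμ Xp hXpL]
  by_cases hp : p ∈ Set.univ ∩ (⋃ H ∈ A, (H : Set (Fin m → ℝ)))ᶜ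
  · rw [if_pos hp, if_pos]
    have hSp0 : Sp = ∅ := by
      rw [hSp, Finset.filter_eq_empty_iff]
      intro H hH
      exact mem_M_iff.1 hp H hH
    rw [hXp, hSp0]
    simp
  · rw [if_neg hp, if_neg]
    intro hXpuniv
    have : ∃ H ∈ A, p ∈ H := by
      by_contra hcon
      push_neg at hcon
      exact hp (mem_M_iff.2 hcon)
    obtain ⟨H₀, hH₀, hpH₀⟩ := this
    have hsub : Xp ⊆ H₀ := by
      rw [hXp]
      intro z hz
      exact Set.mem_iInter₂.1 hz.2 H₀ (Finset.mem_filter.2 ⟨hH₀, hpH₀⟩)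
    rw [hXpuniv] at hsub
    exact hyperplane_ne_univ (hA H₀ hH₀) (Set.eq_univ_of_univ_subset hsub)

lemma essential_pointed {A : Finset (Set (Fin m → ℝ))} (hA : ∀ H ∈ A, IsHyperplane ℝ H)
    (hess : ∃ X ∈ interPosetIn Set.univ A, rkIn ℝ Set.univ X = m)
    (d : Fin m → ℝ) (hd : ∀ H ∈ A, (hpF H).1 d = 0) : d = 0 := by
  rcases Nat.eq_zero_or_pos m with hm | hm
  · funext i
    exact absurd i.isLt (by omega)
  obtain ⟨X, hXL, hrk⟩ := hess
  rw [interPosetIn, Finset.mem_filter] at hXL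
  obtain ⟨hX1, hXne⟩ := hXL
  obtain ⟨S, hS, rfl⟩ := Finset.mem_image.1 hX1
  obtain ⟨p, hp⟩ := hXne
  set X : Set (Fin m → ℝ) := Set.univ ∩ ⋂ H ∈ S, H with hX
  have huniv : flatDim ℝ (Set.univ : Set (Fin m → ℝ)) = m := by
    rw [flatDim, AffineSubspace.span_univ, AffineSubspace.direction_top, finrank_top,
      Module.finrank_fin_fun]
  have hle : flatDim ℝ X ≤ m := by
    rw [flatDim]
    have := Submodule.finrank_le (affineSpan ℝ X).direction
    rwa [Module.finrank_fin_fun] at this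
  have hX0 : flatDim ℝ X = 0 := by
    rw [rkIn, huniv] at hrk
    omega
  have hdirbot : (affineSpan ℝ X).direction = ⊥ := Submodule.finrank_eq_zero.1 hX0
  have hpd : p + d ∈ X := by
    refine ⟨trivial, Set.mem_iInter₂.2 fun H hH => ?_⟩
    have hs := hpF_spec (hA H (Finset.mem_powerset.1 hS hH))
    have hpH : (hpF H).1 p = (hpF H).2 := by
      have := Set.mem_iInter₂.1 hp.2 H hH
      rwa [hs.2] at this
    rw [hs.2]
    show (hpF H).1 (p + d) = (hpF H).2
    rw [map_add, hpH, hd H (Finset.mem_powerset.1 hS hH), add_zero]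
  have hmem : (p + d) -ᵥ p ∈ (affineSpan ℝ X).direction :=
    AffineSubspace.vsub_mem_direction (subset_affineSpan ℝ X hpd) (subset_affineSpan ℝ X hp)
  rw [hdirbot, Submodule.mem_bot] at hmem
  have : (p + d) -ᵥ p = d := by
    rw [vsub_eq_sub]
    abel
  rwa [this] at hmem

end Zasl

/-- For an essential finite arrangement of affine hyperplanes in `ℝ^ℓ`,
the number of bounded chambers equals `(-1)^ℓ π(A,-1) = β(A)`. -/
theorem number_of_bounded_chambers {ℓ : ℕ} (A : Finset (Set (Fin ℓ → ℝ)))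
    (hA : ∀ H ∈ A, IsHyperplane ℝ H)
    (hess : ∃ X ∈ interPosetIn Set.univ A, rkIn ℝ Set.univ X = ℓ)
    (μ : Set (Fin ℓ → ℝ) → ℤ) (hμ : IsMobiusIn Set.univ A μ) :
    (Nat.card {C : Set (Fin ℓ → ℝ) //
        IsChamberIn Set.univ A C ∧ Bornology.IsBounded C} : ℤ)
      = (-1 : ℤ) ^ ℓ * (poinIn ℝ Set.univ A μ).eval (-1) ∧
    (Nat.card {C : Set (Fin ℓ → ℝ) //
        IsChamberIn Set.univ A C ∧ Bornology.IsBounded C} : ℤ)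
      = (((poinIn ℝ Set.univ A μ).eval (-1)).natAbs : ℤ) := by
  classical
  -- `chi` of indicators of poset elements
  have hLaff : ∀ X ∈ interPosetIn Set.univ A, AffSet X ∧ X.Nonempty := by
    intro X hX
    rw [interPosetIn, Finset.mem_filter] at hX
    obtain ⟨hX1, hne⟩ := hX
    obtain ⟨S, hS, rfl⟩ := Finset.mem_image.1 hX1
    refine ⟨affSet_inter affSet_univ (affSet_biInterFinset ?_), hne⟩
    intro H hH
    have hs := hpF_spec (hA H (Finset.mem_powerset.1 hS hH))
    rw [hs.2]
    exact affSet_hyperplane _ _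
  have hXchi : ∀ X ∈ interPosetIn Set.univ A,
      TameN ℓ (sind X (μ X)) ∧ chi ℓ (sind X (μ X)) = μ X :=
    fun X hX => chi_affSet ℓ X (hLaff X hX).1 (hLaff X hX).2 (μ X)
  -- `chi` of indicators of cells
  have hCchi : ∀ C ∈ cells A, TameN ℓ (sind C 1) ∧
      chi ℓ (sind C 1) = if Bornology.IsBounded C then (-1:ℤ)^ℓ * 1 else 0 := by
    intro C hC
    rw [cells, Finset.mem_filter] at hC
    obtain ⟨hC1, hCne⟩ := hC
    obtain ⟨T, hT, rfl⟩ := Finset.mem_image.1 hC1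
    set fT : Set (Fin ℓ → ℝ) → ((Fin ℓ → ℝ) →ₗ[ℝ] ℝ) :=
      fun H => if H ∈ T then (hpF H).1 else -(hpF H).1 with hfT
    set cT : Set (Fin ℓ → ℝ) → ℝ :=
      fun H => if H ∈ T then (hpF H).2 else -(hpF H).2 with hcT
    have hshape : cellT A T = {x | ∀ H ∈ A, fT H x < cT H} := by
      ext x
      show (∀ H ∈ A, _) ↔ (∀ H ∈ A, _)
      refine forall₂_congr fun H hH => ?_
      by_cases ht : H ∈ T
      · simp [hfT, hcT, ht]
      · simp [hfT, hcT, ht, neg_lt_neg_iff]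
    have hpt : ∀ d : Fin ℓ → ℝ, (∀ H ∈ A, fT H d = 0) → d = 0 := by
      intro d hd
      apply essential_pointed hA hess d
      intro H hH
      have := hd H hH
      by_cases ht : H ∈ T
      · rw [hfT] at this
        simp only [if_pos ht] at this
        exact this
      · rw [hfT] at this
        simp only [if_neg ht, LinearMap.neg_apply, neg_eq_zero] at this
        exact this
    rw [hshape]
    exact chi_chamber ℓ A fT cT hpt (hshape ▸ hCne) 1
  -- the two decompositions of the indicator of the complement agree
  have hFeq : (fun p => ∑ X ∈ interPosetIn Set.univ A, sind X (μ X) p)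
      = (fun p => ∑ C ∈ cells A, sind C 1 p) := by
    funext p
    rw [mobius_identity hA μ hμ p, cells_partition hA p]
  have h1 := chi_tame_sum ℓ (interPosetIn Set.univ A) (fun X => sind X (μ X))
    (fun X hX => (hXchi X hX).1)
  have h2 := chi_tame_sum ℓ (cells A) (fun C => sind C 1) (fun C hC => (hCchi C hC).1)
  set B := (cells A).filter (fun C => Bornology.IsBounded C) with hB
  have hmain : ∑ X ∈ interPosetIn Set.univ A, μ X = ((-1:ℤ)^ℓ) * B.card := by
    calc ∑ X ∈ interPosetIn Set.univ A, μ X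
        = ∑ X ∈ interPosetIn Set.univ A, chi ℓ (sind X (μ X)) :=
          Finset.sum_congr rfl fun X hX => ((hXchi X hX).2).symm
      _ = chi ℓ (fun p => ∑ X ∈ interPosetIn Set.univ A, sind X (μ X) p) := h1.2.symm
      _ = chi ℓ (fun p => ∑ C ∈ cells A, sind C 1 p) := by rw [hFeq]
      _ = ∑ C ∈ cells A, chi ℓ (sind C 1) := h2.2
      _ = ∑ C ∈ cells A, (if Bornology.IsBounded C then (-1:ℤ)^ℓ * 1 else 0) :=
          Finset.sum_congr rfl fun C hC => (hCchi C hC).2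
      _ = ∑ C ∈ B, ((-1:ℤ)^ℓ * 1) := (Finset.sum_filter _ _).symm
      _ = ((-1:ℤ)^ℓ) * B.card := by
          rw [Finset.sum_const, mul_one]
          rw [nsmul_eq_mul]
          ring
  have hcard : (Nat.card {C : Set (Fin ℓ → ℝ) //
      IsChamberIn Set.univ A C ∧ Bornology.IsBounded C}) = B.card := by
    have he : ∀ C : Set (Fin ℓ → ℝ),
        (IsChamberIn Set.univ A C ∧ Bornology.IsBounded C) ↔ C ∈ B := by
      intro C
      rw [hB, Finset.mem_filter, chamber_iff hA]
    rw [Nat.card_congr (Equiv.subtypeEquivRight he)]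
    exact Nat.card_eq_finsetCard B
  have heval : (poinIn ℝ Set.univ A μ).eval (-1) = ∑ X ∈ interPosetIn Set.univ A, μ X := by
    rw [poinIn, Polynomial.eval_finset_sum]
    apply Finset.sum_congr rfl
    intro X _
    simp
  have hform : (poinIn ℝ Set.univ A μ).eval (-1) = ((-1:ℤ)^ℓ) * B.card := by
    rw [heval, hmain]
  constructor
  · rw [hcard, hform]
    have : ((-1:ℤ)^ℓ) * ((-1:ℤ)^ℓ) = 1 := by
      rw [← mul_pow]
      simp
    rw [← mul_assoc, this, one_mul]
  · rw [hcard, hform, Int.natAbs_mul, Int.natAbs_pow]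
    simp
end

section
/- Let A be a finite arrangement of affine hyperplanes in ℝ^ℓ and let F^q ⊆ ℝ^ℓ be a q-dimensional affine subspace generic with respect to A. Then the map C ↦ C ∩ F^q is a bijection from the set of chambers of A that meet F^q onto the set of chambers of the restricted arrangement A ∩ F^q in F^q. -/
open scoped Classical

open Set

section Aux

variable {ℓ : ℕ}

/-- Points of a preconnected set avoiding all hyperplanes have their segments avoiding them. -/
lemma segment_subset_compl {A : Finset (Set (Fin ℓ → ℝ))}
    (hA : ∀ H ∈ A, IsHyperplane ℝ H)
    {C : Set (Fin ℓ → ℝ)} (hC : IsPreconnected C)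
    (hCc : C ⊆ (⋃ H ∈ A, H)ᶜ)
    {a b : Fin ℓ → ℝ} (ha : a ∈ C) (hb : b ∈ C) :
    segment ℝ a b ⊆ (⋃ H ∈ A, H)ᶜ := by
  intro y hy
  simp only [mem_compl_iff, mem_iUnion, not_exists]
  intro H hH hyH
  obtain ⟨f, c, hf, rfl⟩ := hA H hH
  have hfc : Continuous f := f.continuous_of_finiteDimensional
  have hsub : C ⊆ {x | f x < c} ∪ {x | c < f x} := by
    intro z hz
    have hne : f z ≠ c := fun h => hCc hz (Set.mem_biUnion hH h)
    rcases hne.lt_or_gt with h | h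
    · exact Or.inl h
    · exact Or.inr h
  have hdisj : Disjoint {x : Fin ℓ → ℝ | f x < c} {x | c < f x} := by
    rw [Set.disjoint_left]
    intro z hz1 hz2
    simp only [mem_setOf_eq] at hz1 hz2
    exact absurd (lt_trans hz1 hz2) (lt_irrefl _)
  rcases hC.subset_or_subset (isOpen_lt hfc continuous_const)
      (isOpen_lt continuous_const hfc) hdisj hsub with h | h
  · have := (convex_halfSpace_lt (f.isLinear) c).segment_subset (h ha) (h hb) hy
    exact absurd hyH (ne_of_lt this)
  · have := (convex_halfSpace_gt (f.isLinear) c).segment_subset (h ha) (h hb) hy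
    exact absurd hyH (ne_of_gt this)

/-- Chambers of a hyperplane arrangement are convex. -/
lemma chamber_convex {A : Finset (Set (Fin ℓ → ℝ))}
    (hA : ∀ H ∈ A, IsHyperplane ℝ H) (x : Fin ℓ → ℝ) :
    Convex ℝ (connectedComponentIn (⋃ H ∈ A, H)ᶜ x) := by
  set comp := (⋃ H ∈ A, (H : Set (Fin ℓ → ℝ)))ᶜ
  rw [convex_iff_segment_subset]
  intro a ha b hb
  have hseg : segment ℝ a b ⊆ comp :=
    segment_subset_compl hA isPreconnected_connectedComponentIn
      (connectedComponentIn_subset _ _) ha hb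
  have h1 : segment ℝ a b ⊆ connectedComponentIn comp a :=
    (convex_segment a b).isPreconnected.subset_connectedComponentIn
      (left_mem_segment ℝ a b) hseg
  rwa [connectedComponentIn_eq ha]

/-- The key lemma: intersecting a chamber with a convex set gives the connected
component of the intersection. -/
lemma chamber_inter_eq {A : Finset (Set (Fin ℓ → ℝ))}
    (hA : ∀ H ∈ A, IsHyperplane ℝ H)
    {F : Set (Fin ℓ → ℝ)} (hFconv : Convex ℝ F)
    {x' x : Fin ℓ → ℝ}
    (hx : x ∈ connectedComponentIn (⋃ H ∈ A, H)ᶜ x' ∩ F) :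
    connectedComponentIn (⋃ H ∈ A, H)ᶜ x' ∩ F
      = connectedComponentIn (F ∩ (⋃ H ∈ A, H)ᶜ) x := by
  set comp := (⋃ H ∈ A, (H : Set (Fin ℓ → ℝ)))ᶜ
  set C := connectedComponentIn comp x'
  have hCc : C ⊆ comp := connectedComponentIn_subset _ _
  apply Set.Subset.antisymm
  · have hconv : Convex ℝ (C ∩ F) := (chamber_convex hA x').inter hFconv
    refine hconv.isPreconnected.subset_connectedComponentIn hx ?_
    intro z hz
    exact ⟨hz.2, hCc hz.1⟩
  · intro z hz
    have hsub : connectedComponentIn (F ∩ comp) x ⊆ comp := fun w hw =>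
      (connectedComponentIn_subset _ _ hw).2
    have h1 : connectedComponentIn (F ∩ comp) x ⊆ connectedComponentIn comp x :=
      isPreconnected_connectedComponentIn.subset_connectedComponentIn
        (mem_connectedComponentIn ⟨hx.2, hCc hx.1⟩) hsub
    have h2 : connectedComponentIn comp x = C := (connectedComponentIn_eq hx.1).symm
    exact ⟨h2 ▸ h1 hz, (connectedComponentIn_subset _ _ hz).1⟩

end Aux

/-- For a finite arrangement `A` of affine hyperplanes in `ℝ^ℓ` and a
generic `q`-dimensional affine subspace `F`, the map `C ↦ C ∩ F` is a bijection from
the set of chambers of `A` meeting `F` onto the set of chambers of the restricted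
arrangement `A ∩ F` in `F`. -/
theorem chamber_section_bijection {ℓ : ℕ} (A : Finset (Set (Fin ℓ → ℝ)))
    (hA : ∀ H ∈ A, IsHyperplane ℝ H)
    (q : ℕ) (F : Set (Fin ℓ → ℝ)) (hF : IsGenericFlat ℝ q A F) :
    Set.BijOn (fun C => C ∩ F)
      {C : Set (Fin ℓ → ℝ) | IsChamberIn Set.univ A C ∧ (C ∩ F).Nonempty}
      {C' : Set (Fin ℓ → ℝ) | IsChamberIn F A C'} := by
  obtain ⟨⟨W, hW⟩, -, -, -⟩ := hF
  have hFconv : Convex ℝ F := hW ▸ W.convex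
  set comp := (⋃ H ∈ A, (H : Set (Fin ℓ → ℝ)))ᶜ with hcomp
  have huniv : Set.univ ∩ comp = comp := Set.univ_inter _
  constructor
  · -- MapsTo
    rintro C ⟨⟨y, hy, rfl⟩, x, hx⟩
    rw [huniv] at hx ⊢
    refine ⟨x, ⟨hx.2, connectedComponentIn_subset _ _ hx.1⟩, ?_⟩
    exact chamber_inter_eq hA hFconv hx
  constructor
  · -- InjOn
    rintro C1 ⟨⟨y1, hy1, rfl⟩, h1⟩ C2 ⟨⟨y2, hy2, rfl⟩, h2⟩ heq
    rw [huniv] at *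
    simp only at heq
    obtain ⟨x, hx⟩ := h1
    have hx2 : x ∈ connectedComponentIn comp y2 ∩ F := heq ▸ hx
    rw [connectedComponentIn_eq hx.1, connectedComponentIn_eq hx2.1]
  · -- SurjOn
    rintro C' ⟨x, hx, rfl⟩
    refine ⟨connectedComponentIn comp x, ⟨⟨x, ?_, ?_⟩, ⟨x, ?_⟩⟩, ?_⟩
    · rw [huniv]; exact hx.2
    · rw [huniv]
    · exact ⟨mem_connectedComponentIn hx.2, hx.1⟩
    · exact chamber_inter_eq hA hFconv ⟨mem_connectedComponentIn hx.2, hx.1⟩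
end
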